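/- arXiv:1712.04051 — 4 statements merged into one kernel-verified Lean document; each statement's English description precedes it below -/
import Mathlib

section
/- For every positive integer n and every θ in the unit interval U, there exists a unique pair of coprime polynomials G, H ∈ F_q[T] with H monic, deg G < deg H ≤ n/2, and |{θ − G/H}| < q^{−(deg H + n/2)}. -/
/- Common setup: the field `F_q(T)_∞` of formal Laurent series in `1/T` is realized as
`LaurentSeries F` in the variable `X = 1/T`; the coefficient of `T^l` is the
`X`-coefficient at `-l`. -/

noncomputable section
open Polynomial Finset Filter
open scoped Classical

/-- The element `T` of `F_q(T)_∞`. -/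
def Tinf (F : Type) [Field F] : LaurentSeries F := HahnSeries.single (-1 : ℤ) (1 : F)

variable {F : Type} [Field F]

/-- The embedding of `F[T]` into `F_q(T)_∞`. -/
def toInf (G : Polynomial F) : LaurentSeries F := Polynomial.aeval (Tinf F) G

/-- The coefficient of `T^l` of an element of `F_q(T)_∞`. -/
def coeffT (θ : LaurentSeries F) (l : ℤ) : F := θ.coeff (-l)

/-- The unit interval `U = {Σ_{l<0} a_l T^l}`. -/
def UnitInt (F : Type) [Field F] : Set (LaurentSeries F) :=
  {θ | ∀ l : ℤ, 0 ≤ l → coeffT θ l = 0}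

/-- The fractional part `{β} = Σ_{l<0} β_l T^l`. -/
def lfrac (θ : LaurentSeries F) : LaurentSeries F where
  coeff m := if 0 < m then θ.coeff m else 0
  isPWO_support' := θ.isPWO_support'.mono (fun m hm => by
    simp only [Function.mem_support] at hm ⊢
    intro h; apply hm; split_ifs
    · exact h
    · rfl)

/-- The absolute value on `F_q(T)_∞`: `|Σ_{l≤k} a_l T^l| = q^k` when `a_k ≠ 0`, and `|0| = 0`. -/
def lAbs (q : ℕ) (θ : LaurentSeries F) : ℝ :=
  if θ = 0 then 0 else (q : ℝ) ^ (-(θ.order : ℝ))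

/-- The additive character `ψ(a) = exp(2πi·Tr_{F_q/F_p}(a)/p)`. -/
def psiChar (p : ℕ) [CharP F p] [Algebra (ZMod p) F] (a : F) : ℂ :=
  Complex.exp (2 * Real.pi * Complex.I * (((Algebra.trace (ZMod p) F) a).val : ℂ) / (p : ℂ))

/-- The map `e : F_q(T)_∞ → ℂ`, `e(Σ a_i T^i) = ψ(a₋₁)`. -/
def eInf (p : ℕ) [CharP F p] [Algebra (ZMod p) F] (θ : LaurentSeries F) : ℂ :=
  psiChar p (coeffT θ (-1))

/-- The set `M_n` of monic polynomials of degree `n`. -/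
def Mset (F : Type) [Field F] (n : ℕ) : Set (Polynomial F) := {P | P.Monic ∧ P.natDegree = n}

/-- The set of monic irreducible polynomials of degree `n`. -/
def PIrr (F : Type) [Field F] (n : ℕ) : Set (Polynomial F) :=
  {P | P.Monic ∧ P.natDegree = n ∧ Irreducible P}

/-- `π_q(n)`, the number of monic irreducible polynomials of degree `n` over `F_q`. -/
def piq (F : Type) [Field F] (n : ℕ) : ℕ := (PIrr F n).ncard

/-- `f(θ) = Σ_{P ∈ M_n, P irreducible} e(θP)`. -/
def fsum (p : ℕ) [CharP F p] [Algebra (ZMod p) F] (n : ℕ) (θ : LaurentSeries F) : ℂ :=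
  ∑ᶠ P ∈ PIrr F n, eInf p (toInf P * θ)

/-- The set `C` of monic degree-`n` polynomials with `b_i = a_i` for `i ∈ 𝓘` and
`b_j ∉ S_j` for `j ∈ 𝓙`. -/
def Cset (n : ℕ) (I J : Finset ℕ) (a : ℕ → F) (S : ℕ → Finset F) : Set (Polynomial F) :=
  {P | P.Monic ∧ P.natDegree = n ∧ (∀ i ∈ I, P.coeff i = a i) ∧ ∀ j ∈ J, P.coeff j ∉ S j}

/-- The Fourier transform `F̂_{q,n}(θ) = Σ_{G ∈ M_n} 1_C(G)·e(Gθ)`. -/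
def FhatC (p : ℕ) [CharP F p] [Algebra (ZMod p) F] (C : Set (Polynomial F)) (n : ℕ)
    (θ : LaurentSeries F) : ℂ :=
  ∑ᶠ G ∈ Mset F n, Set.indicator C (fun _ => (1:ℂ)) G * eInf p (toInf G * θ)

/-- `α(m)`, the sup over `i_1 < … < i_m` in `𝓙` of `Π (N_{i_j} + 1)`. -/
def alphaJ (J : Finset ℕ) (S : ℕ → Finset F) (m : ℕ) : ℕ :=
  (J.powersetCard m).sup fun s => ∏ i ∈ s, ((S i).card + 1)

/-- `Y_h = Σ |F̂_{q,n}(G/H)|` over monic squarefree `H ∉ {1,T}` of degree `h` and `G`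
coprime to `H` with `deg G < deg H`. -/
def Yh (p : ℕ) [CharP F p] [Algebra (ZMod p) F] (C : Set (Polynomial F)) (n h : ℕ) : ℝ :=
  ∑ᶠ GH ∈ {GH : Polynomial F × Polynomial F |
      GH.2.Monic ∧ Squarefree GH.2 ∧ GH.2.natDegree = h ∧ GH.2 ≠ 1 ∧ GH.2 ≠ Polynomial.X ∧
      IsCoprime GH.1 GH.2 ∧ GH.1.degree < GH.2.degree},
    ‖FhatC p C n (toInf GH.1 / toInf GH.2)‖

/-- The constraint set `C_i`: `{a_i}` for `i ∈ 𝓘`, and `F_q \ S_i` for `i ∈ 𝓙`. -/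
def Ccon (I : Finset ℕ) (a : ℕ → F) (S : ℕ → Finset F) (i : ℕ) : Set F :=
  if i ∈ I then {a i} else {b | b ∉ S i}

/-- The Fourier transform of the degree-`l` family with constraint sets `Cc 0, …, Cc (l-1)`:
`F̂_{q,l}(η) = Σ_{G ∈ M_l} (Π_{i<l} 1_{Cc i}(g_i))·e(Gη)`. -/
def FhatGen (p : ℕ) [CharP F p] [Algebra (ZMod p) F] (Cc : ℕ → Set F) (l : ℕ)
    (θ : LaurentSeries F) : ℂ :=
  ∑ᶠ G ∈ Mset F l,
    (∏ i ∈ Finset.range l, Set.indicator (Cc i) (fun _ => (1:ℂ)) (G.coeff i)) *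
      eInf p (toInf G * θ)



lemma tinf_pow (i : ℕ) : (Tinf F) ^ i = HahnSeries.single (-(i:ℤ)) (1 : F) := by
  rw [Tinf, HahnSeries.single_pow]; simp

lemma toInf_coeff (G : Polynomial F) (m : ℤ) :
    (toInf G).coeff m = if m ≤ 0 then G.coeff (-m).toNat else 0 := by
  rw [toInf, Polynomial.aeval_def, Polynomial.eval₂_eq_sum_range]
  have hsum : (∑ i ∈ Finset.range (G.natDegree+1),
        algebraMap F (LaurentSeries F) (G.coeff i) * Tinf F ^ i).coeff m
      = ∑ i ∈ Finset.range (G.natDegree+1),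
        (algebraMap F (LaurentSeries F) (G.coeff i) * Tinf F ^ i).coeff m :=
    map_sum (HahnSeries.coeff.addMonoidHom m) _ _
  rw [hsum]
  have hterm : ∀ i : ℕ, (algebraMap F (LaurentSeries F) (G.coeff i) * Tinf F ^ i)
      = HahnSeries.single (-(i:ℤ)) (G.coeff i) := by
    intro i
    rw [tinf_pow, HahnSeries.algebraMap_apply', PowerSeries.algebraMap_apply,
      Algebra.algebraMap_self, RingHom.id_apply, HahnSeries.ofPowerSeries_C, HahnSeries.C_apply,
      HahnSeries.single_mul_single, zero_add, mul_one]
  simp only [hterm, HahnSeries.coeff_single]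
  by_cases hm : m ≤ 0
  · have hk : ∀ i : ℕ, (m = -(i:ℤ)) ↔ i = (-m).toNat := by intro i; omega
    rw [if_pos hm]
    simp only [hk]
    rw [Finset.sum_ite_eq']
    split_ifs with h
    · rfl
    · rw [Finset.mem_range, not_lt] at h
      exact (Polynomial.coeff_eq_zero_of_natDegree_lt (by omega)).symm
  · rw [if_neg hm]
    apply Finset.sum_eq_zero; intro i _
    rw [if_neg (by omega)]


lemma le_order_of {x : LaurentSeries F} (hx : x ≠ 0) {k : ℤ}
    (h : ∀ m < k, x.coeff m = 0) : k ≤ x.order := by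
  rw [HahnSeries.order_of_ne hx]
  rw [Set.IsWF.le_min_iff]
  intro b hb
  by_contra hc
  exact hb (h b (not_le.mp hc))

lemma toInf_ne_zero {G : Polynomial F} (hG : G ≠ 0) : toInf G ≠ 0 := by
  intro h
  have := toInf_coeff G (-(G.natDegree : ℤ))
  rw [h] at this
  simp only [HahnSeries.coeff_zero, neg_neg, Int.toNat_natCast] at this
  rw [if_pos (by omega)] at this
  exact Polynomial.leadingCoeff_ne_zero.mpr hG this.symm

lemma toInf_order {G : Polynomial F} (hG : G ≠ 0) :
    (toInf G).order = -(G.natDegree : ℤ) := by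
  apply le_antisymm
  · apply HahnSeries.order_le_of_coeff_ne_zero
    rw [toInf_coeff, if_pos (by omega)]
    simp only [neg_neg, Int.toNat_natCast]
    exact Polynomial.leadingCoeff_ne_zero.mpr hG
  · apply le_order_of (toInf_ne_zero hG)
    intro m hm
    rw [toInf_coeff]
    split_ifs with h
    · exact Polynomial.coeff_eq_zero_of_natDegree_lt (by omega)
    · rfl

lemma toInf_injective : Function.Injective (toInf (F := F)) := by
  intro a b h
  by_contra hab
  exact toInf_ne_zero (sub_ne_zero.mpr hab) (by rw [toInf, map_sub, ← toInf, ← toInf, h, sub_self])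

lemma lAbs_lt_rpow_iff {q : ℕ} (hq : 1 < (q:ℝ)) (x : LaurentSeries F) (c : ℝ) :
    lAbs q x < (q:ℝ) ^ (-c) ↔ x = 0 ∨ c < (x.order : ℝ) := by
  unfold lAbs
  split_ifs with h
  · simp only [h, true_or, iff_true]
    exact Real.rpow_pos_of_pos (by linarith) _
  · rw [Real.rpow_lt_rpow_left_iff hq, neg_lt_neg_iff]
    simp [h]

lemma mem_unitInt_iff {θ : LaurentSeries F} :
    θ ∈ UnitInt F ↔ ∀ m : ℤ, m ≤ 0 → θ.coeff m = 0 := by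
  constructor
  · intro h m hm
    have := h (-m) (by omega)
    rwa [coeffT, neg_neg] at this
  · intro h l hl
    exact h (-l) (by omega)

lemma lfrac_coeff (θ : LaurentSeries F) (m : ℤ) :
    (lfrac θ).coeff m = if 0 < m then θ.coeff m else 0 := rfl

lemma lfrac_eq_self {θ : LaurentSeries F} (h : ∀ m : ℤ, m ≤ 0 → θ.coeff m = 0) :
    lfrac θ = θ := by
  ext m
  rw [lfrac_coeff]
  split_ifs with hm
  · rfl
  · exact (h m (not_lt.mp hm)).symm


lemma exists_small_H (θ : LaurentSeries F) (m : ℕ) :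
    ∃ H : Polynomial F, H ≠ 0 ∧ H.natDegree ≤ m ∧
      ∀ k : ℤ, 1 ≤ k → k ≤ (m:ℤ) → (toInf H * θ).coeff k = 0 := by
  let L : Polynomial.degreeLT F (m+1) →ₗ[F] (Fin m → F) :=
    { toFun := fun P j => (toInf P.1 * θ).coeff ((j:ℤ)+1)
      map_add' := by
        intro a b
        funext j
        simp only [toInf, Submodule.coe_add, map_add, add_mul, HahnSeries.coeff_add, Pi.add_apply]
      map_smul' := by
        intro c a
        funext j
        simp only [toInf, SetLike.val_smul, Polynomial.smul_eq_C_mul, map_mul, Polynomial.aeval_C,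
          RingHom.id_apply, Pi.smul_apply, smul_eq_mul]
        rw [HahnSeries.algebraMap_apply', PowerSeries.algebraMap_apply, Algebra.algebraMap_self,
          RingHom.id_apply, HahnSeries.ofPowerSeries_C, mul_assoc, HahnSeries.C_mul_eq_smul,
          HahnSeries.coeff_smul, smul_eq_mul] }
  have hrank : Module.finrank F (Polynomial.degreeLT F (m+1)) = m + 1 := by
    rw [(Polynomial.degreeLTEquiv F (m+1)).finrank_eq]
    simp
  have hnotinj : ¬ Function.Injective L := by
    intro hinj
    have := LinearMap.finrank_le_finrank_of_injective hinj
    rw [hrank] at this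
    simp [Module.finrank_pi] at this
  rw [← LinearMap.ker_eq_bot] at hnotinj
  obtain ⟨P, hPmem, hPne⟩ := Submodule.exists_mem_ne_zero_of_ne_bot hnotinj
  refine ⟨P.1, ?_, ?_, ?_⟩
  · simpa using hPne
  · have := Polynomial.mem_degreeLT.mp P.2
    by_cases h0 : (P : Polynomial F) = 0
    · simp [h0]
    · have := (Polynomial.natDegree_lt_iff_degree_lt h0).mpr this
      omega
  · intro k hk1 hkm
    have hjm : (k-1).toNat < m := by omega
    have h2 : (toInf (P : Polynomial F) * θ).coeff
        ((((⟨(k-1).toNat, hjm⟩ : Fin m) : ℕ) : ℤ) + 1) = 0 :=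
      congrFun (LinearMap.mem_ker.mp hPmem) ⟨(k-1).toNat, hjm⟩
    have hj : ((((⟨(k-1).toNat, hjm⟩ : Fin m) : ℕ) : ℤ)) + 1 = k := by
      show (((k-1).toNat : ℕ) : ℤ) + 1 = k
      omega
    rwa [hj] at h2


lemma toInf_mul (a b : Polynomial F) : toInf (a * b) = toInf a * toInf b := by
  rw [toInf, map_mul]; rfl

lemma toInf_sub (a b : Polynomial F) : toInf (a - b) = toInf a - toInf b := by
  rw [toInf, map_sub]; rfl

lemma lfrac_zero : lfrac (0 : LaurentSeries F) = 0 := lfrac_eq_self (fun _ _ => rfl)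

lemma tail_coeff_zero {G H : Polynomial F} (hH0 : H ≠ 0) (hdeg : G.degree < H.degree) :
    ∀ k : ℤ, k ≤ 0 → (toInf G / toInf H).coeff k = 0 := by
  intro k hk
  by_cases hG : G = 0
  · rw [hG, toInf, map_zero, zero_div]; rfl
  · apply HahnSeries.coeff_eq_zero_of_lt_order
    have hne : toInf G / toInf H ≠ 0 := div_ne_zero (toInf_ne_zero hG) (toInf_ne_zero hH0)
    have h1 : (toInf G / toInf H) * toInf H = toInf G := div_mul_cancel₀ _ (toInf_ne_zero hH0)
    have h2 := HahnSeries.order_mul hne (toInf_ne_zero hH0)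
    rw [h1, toInf_order hG, toInf_order hH0] at h2
    have h3 : G.natDegree < H.natDegree := Polynomial.natDegree_lt_natDegree hG hdeg
    omega


set_option maxHeartbeats 2000000 in
lemma exists_pair (q n : ℕ) (hq1 : 1 < (q:ℝ)) (hn : 0 < n) (θ : LaurentSeries F)
    (hθ : θ ∈ UnitInt F) :
    ∃ GH : Polynomial F × Polynomial F,
      IsCoprime GH.1 GH.2 ∧ GH.2.Monic ∧ GH.1.degree < GH.2.degree ∧
      (GH.2.natDegree : ℝ) ≤ (n : ℝ) / 2 ∧
      lAbs q (lfrac (θ - toInf GH.1 / toInf GH.2)) <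
        (q : ℝ) ^ (-((GH.2.natDegree : ℝ) + (n : ℝ) / 2)) := by
  set m := n / 2 with hm
  obtain ⟨H, hH0, hHdeg, hHcoeff⟩ := exists_small_H θ m
  have hθc : ∀ k : ℤ, k ≤ 0 → θ.coeff k = 0 := mem_unitInt_iff.mp hθ
  have hθord : ∀ k : ℤ, k ≤ -(H.natDegree:ℤ) → (toInf H * θ).coeff k = 0 := by
    intro k hk
    by_cases h0 : θ = 0
    · simp [h0]
    · apply HahnSeries.coeff_eq_zero_of_lt_order
      rw [HahnSeries.order_mul (toInf_ne_zero hH0) h0, toInf_order hH0]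
      have h1 : (1:ℤ) ≤ θ.order := le_order_of h0 (fun l hl => hθc l (by omega))
      omega
  set P : Polynomial F := ∑ i ∈ Finset.range (H.natDegree+1),
    Polynomial.C ((toInf H * θ).coeff (-(i:ℤ))) * Polynomial.X ^ i with hPdef
  have hPcoeff : ∀ i : ℕ, P.coeff i = (toInf H * θ).coeff (-(i:ℤ)) := by
    intro i
    rw [hPdef, Polynomial.finset_sum_coeff]
    simp only [Polynomial.coeff_C_mul, Polynomial.coeff_X_pow, mul_ite, mul_one, mul_zero]
    rw [Finset.sum_ite_eq (Finset.range (H.natDegree+1)) i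
      (fun j => (toInf H * θ).coeff (-(j:ℤ)))]
    split_ifs with h
    · rfl
    · rw [Finset.mem_range, not_lt] at h
      exact (hθord _ (by omega)).symm
  have hPhigh : ∀ i : ℕ, H.natDegree ≤ i → P.coeff i = 0 := by
    intro i hi; rw [hPcoeff]; exact hθord _ (by omega)
  have hPdeg : P.degree < H.degree := by
    rw [Polynomial.degree_eq_natDegree hH0]
    exact (Polynomial.degree_lt_iff_coeff_zero _ _).mpr
      (fun i hi => hPhigh i (by exact_mod_cast hi))
  set δ₀ : LaurentSeries F := toInf H * θ - toInf P with hδ₀def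
  have hδ₀coeff : ∀ k : ℤ, k ≤ (m:ℤ) → δ₀.coeff k = 0 := by
    intro k hk
    rw [hδ₀def, HahnSeries.coeff_sub, toInf_coeff]
    by_cases h1 : k ≤ 0
    · rw [if_pos h1, hPcoeff, show -(((-k).toNat:ℕ):ℤ) = k by omega, sub_self]
    · rw [if_neg h1, sub_zero]
      exact hHcoeff k (by omega) hk
  set d := GCDMonoid.gcd P H with hd
  have hdne : d ≠ 0 := gcd_ne_zero_of_right hH0
  set G₁ := P / d with hG₁def
  set H₁ := H / d with hH₁def
  have hPd : d * G₁ = P :=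
    EuclideanDomain.mul_div_cancel' hdne (gcd_dvd_left _ _)
  have hHd : d * H₁ = H :=
    EuclideanDomain.mul_div_cancel' hdne (gcd_dvd_right _ _)
  have hH₁ : H₁ ≠ 0 := fun h => hH0 (by rw [← hHd, h, mul_zero])
  have hcop : IsCoprime G₁ H₁ := isCoprime_div_gcd_div_gcd hH0
  set c := H₁.leadingCoeff with hc_def
  have hc : c ≠ 0 := Polynomial.leadingCoeff_ne_zero.mpr hH₁
  have hCcne : Polynomial.C c⁻¹ ≠ 0 := by
    simpa using inv_ne_zero hc
  set G₂ := G₁ * Polynomial.C c⁻¹ with hG₂def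
  set H₂ := H₁ * Polynomial.C c⁻¹ with hH₂def
  have hH₂monic : H₂.Monic := Polynomial.monic_mul_leadingCoeff_inv hH₁
  have hH₂ne : H₂ ≠ 0 := hH₂monic.ne_zero
  have hCc : Polynomial.C c * Polynomial.C c⁻¹ = 1 := by
    rw [← Polynomial.C_mul, mul_inv_cancel₀ hc, Polynomial.C_1]
  have hcop₂ : IsCoprime G₂ H₂ := by
    obtain ⟨u, v, huv⟩ := hcop
    refine ⟨Polynomial.C c * u, Polynomial.C c * v, ?_⟩
    have : Polynomial.C c * u * G₂ + Polynomial.C c * v * H₂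
        = (u * G₁ + v * H₁) * (Polynomial.C c * Polynomial.C c⁻¹) := by
      rw [hG₂def, hH₂def]; ring
    rw [this, huv, hCc, one_mul]
  -- degrees
  have hdegC : (Polynomial.C (c⁻¹ : F)).degree = 0 := Polynomial.degree_C (inv_ne_zero hc)
  have hG₁H₁deg : G₁.degree < H₁.degree := by
    by_cases hG₁0 : G₁ = 0
    · rw [hG₁0, Polynomial.degree_zero]
      exact bot_lt_iff_ne_bot.mpr (fun h => hH₁ (Polynomial.degree_eq_bot.mp h))
    · have hP0 : P ≠ 0 := by rw [← hPd]; exact mul_ne_zero hdne hG₁0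
      have h1 : P.natDegree < H.natDegree := Polynomial.natDegree_lt_natDegree hP0 hPdeg
      have h2 : P.natDegree = d.natDegree + G₁.natDegree := by
        rw [← hPd, Polynomial.natDegree_mul hdne hG₁0]
      have h3 : H.natDegree = d.natDegree + H₁.natDegree := by
        rw [← hHd, Polynomial.natDegree_mul hdne hH₁]
      exact Polynomial.degree_lt_degree (by omega)
  have hG₂H₂deg : G₂.degree < H₂.degree := by
    rw [hG₂def, hH₂def, Polynomial.degree_mul, Polynomial.degree_mul, hdegC, add_zero, add_zero]
    exact hG₁H₁deg
  have hH₂leH : H₂.natDegree ≤ H.natDegree := by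
    have h1 : H₂.natDegree = H₁.natDegree := by
      rw [hH₂def, Polynomial.natDegree_mul hH₁ hCcne, Polynomial.natDegree_C, add_zero]
    have h3 : H.natDegree = d.natDegree + H₁.natDegree := by
      rw [← hHd, Polynomial.natDegree_mul hdne hH₁]
    omega
  have hH₂natdeg : H₂.natDegree ≤ m := hH₂leH.trans hHdeg
  -- Laurent series identity
  have hHne := toInf_ne_zero hH0
  have hdiv : toInf G₂ / toInf H₂ = toInf P / toInf H := by
    rw [hG₂def, hH₂def, toInf_mul, toInf_mul,
      mul_div_mul_right _ _ (toInf_ne_zero hCcne), ← hPd, ← hHd, toInf_mul, toInf_mul,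
      mul_div_mul_left _ _ (toInf_ne_zero hdne)]
  have hδeq : θ - toInf G₂ / toInf H₂ = δ₀ / toInf H := by
    have e1 : δ₀ / toInf H = θ - toInf P / toInf H := by
      rw [hδ₀def, sub_div, mul_div_cancel_left₀ _ hHne]
    rw [hdiv, e1]
  refine ⟨(G₂, H₂), hcop₂, hH₂monic, hG₂H₂deg, ?_, ?_⟩
  · have h2m : (m:ℝ) ≤ (n:ℝ)/2 := by
      rw [le_div_iff₀ (by norm_num : (0:ℝ) < 2)]
      exact_mod_cast Nat.div_mul_le_self n 2
    have : (H₂.natDegree : ℝ) ≤ (m : ℝ) := by exact_mod_cast hH₂natdeg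
    simp only
    linarith
  · simp only
    rw [hδeq]
    set δ := δ₀ / toInf H with hδdef
    by_cases hδ : δ = 0
    · rw [hδ, lfrac_zero]
      rw [lAbs]
      rw [if_pos rfl]
      exact Real.rpow_pos_of_pos (by linarith) _
    · have hδ₀ne : δ₀ ≠ 0 := fun h => hδ (by rw [hδdef, h, zero_div])
      have hordδ₀ : (m:ℤ)+1 ≤ δ₀.order :=
        le_order_of hδ₀ne (fun k hk => hδ₀coeff k (by omega))
      have hordδ : δ.order = δ₀.order + H.natDegree := by
        have h1 : δ * toInf H = δ₀ := div_mul_cancel₀ _ hHne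
        have h2 := HahnSeries.order_mul hδ hHne
        rw [h1, toInf_order hH0] at h2
        omega
      have hordpos : (1:ℤ) ≤ δ.order := by omega
      have hfrac : lfrac δ = δ := lfrac_eq_self (fun k hk =>
        HahnSeries.coeff_eq_zero_of_lt_order (by omega))
      rw [hfrac, lAbs_lt_rpow_iff hq1]
      right
      have hmn : (n:ℝ)/2 < (m:ℝ) + 1 := by
        rw [div_lt_iff₀ (by norm_num : (0:ℝ) < 2)]
        have := Nat.div_add_mod n 2
        have h2 : n < (m + 1) * 2 := by omega
        exact_mod_cast h2
      have hod : ((m:ℝ) + 1 + (H₂.natDegree:ℝ)) ≤ (δ.order : ℝ) := by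
        have : (m:ℤ) + 1 + (H₂.natDegree:ℤ) ≤ δ.order := by
          have : (H₂.natDegree:ℤ) ≤ (H.natDegree:ℤ) := by exact_mod_cast hH₂leH
          omega
        exact_mod_cast this
      linarith


lemma pair_unique (q n : ℕ) (hq1 : 1 < (q:ℝ)) (θ : LaurentSeries F) (hθ : θ ∈ UnitInt F)
    (G H G' H' : Polynomial F)
    (hcop : IsCoprime G H) (hmon : H.Monic) (hdeg : G.degree < H.degree)
    (hdeg2 : (H.natDegree : ℝ) ≤ (n:ℝ)/2)
    (habs : lAbs q (lfrac (θ - toInf G / toInf H)) < (q:ℝ) ^ (-((H.natDegree:ℝ) + (n:ℝ)/2)))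
    (hcop' : IsCoprime G' H') (hmon' : H'.Monic) (hdeg' : G'.degree < H'.degree)
    (hdeg2' : (H'.natDegree : ℝ) ≤ (n:ℝ)/2)
    (habs' : lAbs q (lfrac (θ - toInf G' / toInf H')) <
      (q:ℝ) ^ (-((H'.natDegree:ℝ) + (n:ℝ)/2))) :
    G = G' ∧ H = H' := by
  have hH0 : H ≠ 0 := hmon.ne_zero
  have hH0' : H' ≠ 0 := hmon'.ne_zero
  have hθc : ∀ k : ℤ, k ≤ 0 → θ.coeff k = 0 := mem_unitInt_iff.mp hθ
  set δ : LaurentSeries F := θ - toInf G / toInf H with hδdef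
  set δ' : LaurentSeries F := θ - toInf G' / toInf H' with hδ'def
  have hδc : ∀ k : ℤ, k ≤ 0 → δ.coeff k = 0 := by
    intro k hk
    rw [hδdef, HahnSeries.coeff_sub, hθc k hk, tail_coeff_zero hH0 hdeg k hk, sub_zero]
  have hδc' : ∀ k : ℤ, k ≤ 0 → δ'.coeff k = 0 := by
    intro k hk
    rw [hδ'def, HahnSeries.coeff_sub, hθc k hk, tail_coeff_zero hH0' hdeg' k hk, sub_zero]
  rw [lfrac_eq_self hδc] at habs
  rw [lfrac_eq_self hδc'] at habs'
  have hor := (lAbs_lt_rpow_iff hq1 δ _).mp habs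
  have hor' := (lAbs_lt_rpow_iff hq1 δ' _).mp habs'
  have main : toInf G / toInf H = toInf G' / toInf H' → G = G' ∧ H = H' := by
    intro h
    have h2 : toInf G * toInf H' = toInf G' * toInf H :=
      (div_eq_div_iff (toInf_ne_zero hH0) (toInf_ne_zero hH0')).mp h
    have h3 : G * H' = G' * H := toInf_injective (by rw [toInf_mul, toInf_mul, h2])
    have hHH' : H = H' := by
      have d1 : H ∣ H' := hcop.symm.dvd_of_dvd_mul_left ⟨G', by rw [h3]; ring⟩
      have d2 : H' ∣ H := hcop'.symm.dvd_of_dvd_mul_left ⟨G, by rw [← h3]; ring⟩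
      exact Polynomial.eq_of_monic_of_associated hmon hmon' (associated_of_dvd_dvd d1 d2)
    refine ⟨?_, hHH'⟩
    rw [hHH'] at h3
    exact mul_right_cancel₀ hH0' h3
  by_cases hΔ : toInf G / toInf H = toInf G' / toInf H'
  · exact main hΔ
  exfalso
  have hΔne : δ' - δ ≠ 0 := by
    intro h
    apply hΔ
    have h2 := sub_eq_zero.mp h
    rw [hδ'def, hδdef] at h2
    have := sub_right_injective h2
    exact this.symm
  set N : Polynomial F := G * H' - G' * H with hNdef
  have hNne : N ≠ 0 := by
    intro h
    apply hΔ
    have h2 : G * H' = G' * H := by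
      have := sub_eq_zero.mp h
      linear_combination this
    have h3 : toInf G * toInf H' = toInf G' * toInf H := by
      rw [← toInf_mul, ← toInf_mul, h2]
    exact (div_eq_div_iff (toInf_ne_zero hH0) (toInf_ne_zero hH0')).mpr h3
  have hΔform : (δ' - δ) * (toInf H * toInf H') = toInf N := by
    have e1 : toInf G / toInf H * toInf H = toInf G := div_mul_cancel₀ _ (toInf_ne_zero hH0)
    have e2 : toInf G' / toInf H' * toInf H' = toInf G' := div_mul_cancel₀ _ (toInf_ne_zero hH0')
    calc (δ' - δ) * (toInf H * toInf H')
        = (toInf G / toInf H * toInf H) * toInf H' - (toInf G' / toInf H' * toInf H') * toInf H := by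
          rw [hδ'def, hδdef]; ring
      _ = toInf G * toInf H' - toInf G' * toInf H := by rw [e1, e2]
      _ = toInf N := by rw [hNdef, toInf_sub, toInf_mul, toInf_mul]
  have hordle : (δ' - δ).order ≤ (H.natDegree : ℤ) + (H'.natDegree : ℤ) := by
    have h2 := HahnSeries.order_mul hΔne (mul_ne_zero (toInf_ne_zero hH0) (toInf_ne_zero hH0'))
    rw [hΔform, toInf_order hNne, HahnSeries.order_mul (toInf_ne_zero hH0) (toInf_ne_zero hH0'),
      toInf_order hH0, toInf_order hH0'] at h2
    omega
  have hordleR : ((δ' - δ).order : ℝ) ≤ (H.natDegree : ℝ) + (H'.natDegree : ℝ) := by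
    exact_mod_cast hordle
  rcases hor with hδ0 | hordδ
  · rcases hor' with hδ0' | hordδ'
    · exact hΔne (by rw [hδ0, hδ0', sub_self])
    · -- δ = 0, so δ' - δ = δ'
      have he : δ' - δ = δ' := by rw [hδ0, sub_zero]
      rw [he] at hordleR
      linarith
  · rcases hor' with hδ0' | hordδ'
    · have he : δ' - δ = -δ := by rw [hδ0', zero_sub]
      rw [he, HahnSeries.order_neg] at hordleR
      linarith
    · have hmin : min δ'.order δ.order ≤ (δ' - δ).order := by
        have := HahnSeries.min_order_le_order_add (x := δ') (y := -δ) (by rwa [← sub_eq_add_neg])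
        rwa [HahnSeries.order_neg, ← sub_eq_add_neg] at this
      rcases le_total δ'.order δ.order with hle | hle
      · have h5 : δ'.order ≤ (δ' - δ).order := by
          rw [min_eq_left hle] at hmin; exact hmin
        have h6 : (δ'.order : ℝ) ≤ ((δ' - δ).order : ℝ) := by exact_mod_cast h5
        linarith
      · have h5 : δ.order ≤ (δ' - δ).order := by
          rw [min_eq_right hle] at hmin; exact hmin
        have h6 : (δ.order : ℝ) ≤ ((δ' - δ).order : ℝ) := by exact_mod_cast h5
        linarith


/-- Dirichlet's theorem (Hayes): for every positive `n` and `θ ∈ U` there is a unique pair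
of coprime polynomials `G, H` with `H` monic, `deg G < deg H ≤ n/2`, and
`|{θ − G/H}| < q^{−(deg H + n/2)}`. -/
theorem dirichlet_approximation (F : Type) [Field F] [Fintype F]
    (q : ℕ) (hq : q = Fintype.card F)
    (n : ℕ) (hn : 0 < n) (θ : LaurentSeries F) (hθ : θ ∈ UnitInt F) :
    ∃! GH : Polynomial F × Polynomial F,
      IsCoprime GH.1 GH.2 ∧ GH.2.Monic ∧ GH.1.degree < GH.2.degree ∧
      (GH.2.natDegree : ℝ) ≤ (n : ℝ) / 2 ∧
      lAbs q (lfrac (θ - toInf GH.1 / toInf GH.2)) <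
        (q : ℝ) ^ (-((GH.2.natDegree : ℝ) + (n : ℝ) / 2)) := by
  have hq1 : 1 < (q:ℝ) := by
    rw [hq]
    exact_mod_cast Fintype.one_lt_card
  obtain ⟨GH, h⟩ := exists_pair q n hq1 hn θ hθ
  refine ⟨GH, h, ?_⟩
  intro y hy
  obtain ⟨h1, h2, h3, h4, h5⟩ := hy
  obtain ⟨g1, g2, g3, g4, g5⟩ := h
  have heq := pair_unique q n hq1 θ hθ y.1 y.2 GH.1 GH.2 h1 h2 h3 h4 h5 g1 g2 g3 g4 g5
  exact Prod.ext heq.1 heq.2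


end
end

section
/- For every θ = Σ_{l<k} θ_l T^l ∈ F_q(T)_∞, one has |F̂_{q,n}(θ)| ≤ Π_{i ∈ N(θ)} N_i · Π_{i ∈ Z(θ)} q. -/
/- Common setup: the field `F_q(T)_∞` of formal Laurent series in `1/T` is realized as
`LaurentSeries F` in the variable `X = 1/T`; the coefficient of `T^l` is the
`X`-coefficient at `-l`. -/

noncomputable section
open Polynomial Finset Filter
open scoped Classical

variable {F : Type} [Field F]

/-! ### Auxiliary lemmas for the proof -/

section AuxChar

variable (p : ℕ) [Fact p.Prime] [CharP F p] [Algebra (ZMod p) F]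

lemma psiChar_eq_pow (a : F) :
    psiChar p a
      = Complex.exp (2 * Real.pi * Complex.I / p) ^ ((Algebra.trace (ZMod p) F a).val) := by
  rw [psiChar, ← Complex.exp_nat_mul]
  congr 1
  ring

lemma zeta_pow_eq_one : Complex.exp (2 * Real.pi * Complex.I / p) ^ p = 1 := by
  have hp : (p : ℂ) ≠ 0 := Nat.cast_ne_zero.2 (Fact.out (p := p.Prime)).pos.ne'
  rw [← Complex.exp_nat_mul, mul_comm, div_mul_cancel₀ _ hp, Complex.exp_two_pi_mul_I]

lemma psiChar_add (a b : F) : psiChar p (a + b) = psiChar p a * psiChar p b := by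
  haveI : NeZero p := ⟨(Fact.out (p := p.Prime)).ne_zero⟩
  rw [psiChar_eq_pow, psiChar_eq_pow, psiChar_eq_pow, ← pow_add, map_add, ZMod.val_add]
  conv_rhs => rw [← Nat.div_add_mod
      ((Algebra.trace (ZMod p) F a).val + (Algebra.trace (ZMod p) F b).val) p,
    pow_add, pow_mul, zeta_pow_eq_one p, one_pow, one_mul]

lemma psiChar_zero : psiChar p (0 : F) = 1 := by
  rw [psiChar_eq_pow, map_zero]
  simp

lemma psiChar_abs (a : F) : ‖psiChar p a‖ = 1 := by
  have h : psiChar p a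
      = Complex.exp (((2 * Real.pi * ((Algebra.trace (ZMod p) F a).val) / p : ℝ) : ℂ)
          * Complex.I) := by
    rw [psiChar]; congr 1; push_cast; ring
  rw [h, Complex.norm_exp_ofReal_mul_I]

lemma psiChar_sum {ι : Type*} (s : Finset ι) (f : ι → F) :
    psiChar p (∑ i ∈ s, f i) = ∏ i ∈ s, psiChar p (f i) := by
  induction s using Finset.cons_induction with
  | empty => simpa using psiChar_zero p
  | cons i s hi ih => rw [Finset.sum_cons, Finset.prod_cons, psiChar_add, ih]

lemma psiChar_ne_one {a : F} (h : Algebra.trace (ZMod p) F a ≠ 0) : psiChar p a ≠ 1 := by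
  haveI : NeZero p := ⟨(Fact.out (p := p.Prime)).ne_zero⟩
  rw [psiChar_eq_pow]
  have hprim := Complex.isPrimitiveRoot_exp p (Fact.out (p := p.Prime)).ne_zero
  have hv : (Algebra.trace (ZMod p) F a).val ≠ 0 := fun hv => h ((ZMod.val_eq_zero _).mp hv)
  exact hprim.pow_ne_one_of_pos_of_lt hv (ZMod.val_lt _)

lemma exists_trace_ne [Fintype F] {c : F} (hc : c ≠ 0) :
    ∃ b : F, Algebra.trace (ZMod p) F (c * b) ≠ 0 := by
  have hchar : p = ringChar F := (ringChar.eq F p).symm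
  subst hchar
  exact FiniteField.trace_to_zmod_nondegenerate F hc

lemma sum_psiChar_eq_zero [Fintype F] {c : F} (hc : c ≠ 0) :
    ∑ x : F, psiChar p (x * c) = 0 := by
  obtain ⟨b, hb⟩ := exists_trace_ne p hc
  have hne : psiChar p (b * c) ≠ 1 := psiChar_ne_one p (by rwa [mul_comm c b] at hb)
  have key : psiChar p (b * c) * ∑ x : F, psiChar p (x * c) = ∑ x : F, psiChar p (x * c) := by
    rw [Finset.mul_sum]
    have h1 : ∀ x : F, psiChar p (b * c) * psiChar p (x * c) = psiChar p ((b + x) * c) := by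
      intro x; rw [← psiChar_add, add_mul]
    simp_rw [h1]
    exact Fintype.sum_bijective (fun x : F => b + x) (Equiv.addLeft b).bijective
      (fun x => psiChar p ((b + x) * c)) (fun x => psiChar p (x * c)) (fun x => rfl)
  by_contra hS
  apply hne
  have h2 : psiChar p (b * c) * ∑ x : F, psiChar p (x * c)
      = 1 * ∑ x : F, psiChar p (x * c) := by rw [key, one_mul]
  exact mul_right_cancel₀ hS h2

end AuxChar

section AuxPoly

/-- The monic polynomial of degree `n` with prescribed lower coefficients. -/
def phiP {n : ℕ} (b : Fin n → F) : Polynomial F :=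
  X ^ n + ∑ i : Fin n, C (b i) * X ^ (i : ℕ)

lemma phiP_coeff_lt {n : ℕ} (b : Fin n → F) (i : Fin n) : (phiP b).coeff i = b i := by
  rw [phiP, coeff_add, finset_sum_coeff]
  simp [coeff_X_pow, coeff_C_mul, i.2.ne, Fin.val_inj]

lemma phiP_coeff_ge {n : ℕ} (b : Fin n → F) (j : ℕ) (hj : n ≤ j) :
    (phiP b).coeff j = if j = n then 1 else 0 := by
  rw [phiP, coeff_add, coeff_X_pow, finset_sum_coeff]
  have h : ∀ i : Fin n, (C (b i) * X ^ (i : ℕ)).coeff j = 0 := fun i => by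
    rw [coeff_C_mul, coeff_X_pow, if_neg (Nat.lt_of_lt_of_le i.2 hj).ne', mul_zero]
  rw [Finset.sum_congr rfl fun i _ => h i, Finset.sum_const_zero, add_zero]

lemma phiP_degree_aux {n : ℕ} (b : Fin n → F) :
    (∑ i : Fin n, C (b i) * X ^ (i : ℕ) : Polynomial F).degree < n := by
  apply lt_of_le_of_lt (degree_sum_le _ _)
  rw [Finset.sup_lt_iff (by exact_mod_cast WithBot.bot_lt_coe n)]
  intro i _
  exact lt_of_le_of_lt (degree_C_mul_X_pow_le _ _) (by exact_mod_cast i.2)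

lemma phiP_monic {n : ℕ} (b : Fin n → F) : (phiP b).Monic :=
  monic_X_pow_add (phiP_degree_aux b)

lemma phiP_natDegree {n : ℕ} (b : Fin n → F) : (phiP b).natDegree = n := by
  have h : (phiP b).degree = n := by
    rw [phiP, degree_add_eq_left_of_degree_lt, degree_X_pow]
    rw [degree_X_pow]; exact phiP_degree_aux b
  exact natDegree_eq_of_degree_eq_some h

lemma mem_Mset_iff {n : ℕ} (P : Polynomial F) :
    P ∈ Mset F n ↔ ∃ b : Fin n → F, phiP b = P := by
  constructor
  · rintro ⟨hm, hd⟩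
    refine ⟨fun i => P.coeff i, ?_⟩
    ext j
    rcases lt_or_ge j n with hj | hj
    · exact phiP_coeff_lt (fun i => P.coeff i) ⟨j, hj⟩
    · rw [phiP_coeff_ge _ j hj]
      split_ifs with h
      · subst h; conv_rhs => rw [← hd]
        exact hm.coeff_natDegree.symm
      · exact (coeff_eq_zero_of_natDegree_lt (hd ▸ lt_of_le_of_ne hj (Ne.symm h))).symm
  · rintro ⟨b, rfl⟩; exact ⟨phiP_monic b, phiP_natDegree b⟩

lemma phiP_injective {n : ℕ} : Function.Injective (phiP : (Fin n → F) → Polynomial F) := by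
  intro b1 b2 h
  funext i
  rw [← phiP_coeff_lt b1 i, ← phiP_coeff_lt b2 i, h]

lemma toInf_phiP {n : ℕ} (b : Fin n → F) :
    toInf (phiP b)
      = HahnSeries.single (-(n : ℤ)) (1 : F)
        + ∑ i : Fin n, HahnSeries.single (-((i : ℕ) : ℤ)) (b i) := by
  simp only [toInf, phiP, map_add, map_sum, map_mul, map_pow, aeval_X, aeval_C, Tinf,
    HahnSeries.single_pow, HahnSeries.algebraMap_apply, Algebra.algebraMap_self_apply,
    HahnSeries.C_apply, HahnSeries.single_mul_single, one_pow, smul_eq_mul, nsmul_eq_mul,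
    mul_neg_one, mul_one, one_mul, zero_add]
  refine congrArg _ (Finset.sum_congr rfl fun i _ => ?_)
  rw [HahnSeries.algebraMap_apply', PowerSeries.algebraMap_apply, Algebra.algebraMap_self_apply,
    HahnSeries.ofPowerSeries_C, HahnSeries.C_apply, HahnSeries.single_mul_single, zero_add,
    mul_one]

lemma coeff_one_single_neg_mul (k : ℕ) (c : F) (θ : LaurentSeries F) :
    (HahnSeries.single (-(k : ℤ)) c * θ).coeff 1 = c * θ.coeff (1 + k) := by
  have h : (1 : ℤ) = (1 + (k : ℤ)) + (-(k : ℤ)) := by ring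
  conv_lhs => rw [h]
  rw [HahnSeries.coeff_single_mul_add]

lemma eInf_toInf_phiP (p : ℕ) [Fact p.Prime] [CharP F p] [Algebra (ZMod p) F]
    {n : ℕ} (b : Fin n → F) (θ : LaurentSeries F) :
    eInf p (toInf (phiP b) * θ)
      = psiChar p (θ.coeff (1 + n)) * ∏ i : Fin n, psiChar p (b i * θ.coeff (1 + (i : ℕ))) := by
  rw [eInf, coeffT, neg_neg, toInf_phiP, add_mul, Finset.sum_mul, HahnSeries.coeff_add]
  have hsum : (∑ i : Fin n, HahnSeries.single (-((i : ℕ) : ℤ)) (b i) * θ).coeff 1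
      = ∑ i : Fin n, (HahnSeries.single (-((i : ℕ) : ℤ)) (b i) * θ).coeff 1 :=
    map_sum (HahnSeries.coeff.addMonoidHom (1 : ℤ)) _ _
  rw [hsum, coeff_one_single_neg_mul, one_mul]
  have h2 : ∀ i : Fin n, (HahnSeries.single (-((i : ℕ) : ℤ)) (b i) * θ).coeff 1
      = b i * θ.coeff (1 + (i : ℕ)) := fun i => coeff_one_single_neg_mul _ _ _
  simp_rw [h2]
  rw [psiChar_add, psiChar_sum]

end AuxPoly

/-- Lemma: `|F̂_{q,n}(θ)| ≤ Π_{i ∈ N(θ)} N_i · Π_{i ∈ Z(θ)} q`, where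
`Z(θ) = {i ∈ 𝓙 : θ_{−i−1} = 0}` and `N(θ) = {i ∈ 𝓙 : θ_{−i−1} ≠ 0}`. -/
theorem fhat_coefficient_bound (F : Type) [Field F] [Fintype F]
    (p : ℕ) [Fact p.Prime] [CharP F p] [Algebra (ZMod p) F]
    (q : ℕ) (hq : q = Fintype.card F)
    (n : ℕ) (hn : 2 ≤ n) (I J : Finset ℕ)
    (hdisj : Disjoint I J) (hunion : I ∪ J = Finset.range n)
    (a : ℕ → F) (S : ℕ → Finset F) (θ : LaurentSeries F) :
    ‖FhatC p (Cset n I J a S) n θ‖ ≤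
      (∏ i ∈ J.filter (fun i : ℕ => coeffT θ (-(i : ℤ) - 1) ≠ 0), ((S i).card : ℝ)) *
      (∏ _i ∈ J.filter (fun i : ℕ => coeffT θ (-(i : ℤ) - 1) = 0), (q : ℝ)) := by
  classical
  -- coefficient notation
  have hco : ∀ i : ℕ, coeffT θ (-(i : ℤ) - 1) = θ.coeff (1 + (i : ℤ)) := by
    intro i; rw [coeffT]; congr 1; ring
  -- Step 1: the sum over `M_n` is a finite sum over coefficient vectors
  have hMset : Mset F n = ↑(Finset.image (phiP (F := F) (n := n)) Finset.univ) := by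
    ext P
    constructor
    · intro h
      rcases (mem_Mset_iff P).1 h with ⟨b, hb⟩
      exact Finset.mem_coe.2 (Finset.mem_image.2 ⟨b, Finset.mem_univ b, hb⟩)
    · intro h
      rcases Finset.mem_image.1 (Finset.mem_coe.1 h) with ⟨b, -, hb⟩
      exact (mem_Mset_iff P).2 ⟨b, hb⟩
  have h1 : FhatC p (Cset n I J a S) n θ
      = ∑ b : Fin n → F,
          Set.indicator (Cset n I J a S) (fun _ => (1:ℂ)) (phiP b)
            * eInf p (toInf (phiP b) * θ) := by
    rw [FhatC, hMset, finsum_mem_coe_finset,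
      Finset.sum_image (fun b _ c _ h => phiP_injective h)]
  -- Step 2: factor the indicator function
  have hind : ∀ b : Fin n → F,
      Set.indicator (Cset n I J a S) (fun _ => (1:ℂ)) (phiP b)
        = ∏ i : Fin n, (if (i : ℕ) ∈ I then (if b i = a i then (1:ℂ) else 0)
            else (if b i ∈ S i then 0 else 1)) := by
    intro b
    by_cases h : phiP b ∈ Cset n I J a S
    · rw [Set.indicator_of_mem h]
      simp only [Cset, Set.mem_setOf_eq] at h
      obtain ⟨-, -, hI, hJ⟩ := h
      symm
      apply Finset.prod_eq_one
      intro i _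
      by_cases hi : (i : ℕ) ∈ I
      · rw [if_pos hi, if_pos]
        have hc := hI i hi
        rwa [phiP_coeff_lt] at hc
      · have hiJ : (i : ℕ) ∈ J := by
          have hmem : (i : ℕ) ∈ I ∪ J := hunion ▸ Finset.mem_range.2 i.2
          exact (Finset.mem_union.1 hmem).resolve_left hi
        rw [if_neg hi, if_neg]
        have hc := hJ i hiJ
        rwa [phiP_coeff_lt] at hc
    · rw [Set.indicator_of_notMem h]
      symm
      simp only [Cset, Set.mem_setOf_eq] at h
      push_neg at h
      by_cases hC : ∀ i ∈ I, (phiP b).coeff i = a i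
      · obtain ⟨j, hjJ, hjS⟩ := h (phiP_monic b) (phiP_natDegree b) hC
        have hjn : j < n := Finset.mem_range.1 (hunion ▸ Finset.mem_union_right I hjJ)
        apply Finset.prod_eq_zero (Finset.mem_univ (⟨j, hjn⟩ : Fin n))
        have hjI : j ∉ I := fun hj => (Finset.disjoint_left.1 hdisj hj) hjJ
        rw [if_neg hjI, if_pos]
        have hc : (phiP b).coeff j = b ⟨j, hjn⟩ := phiP_coeff_lt b ⟨j, hjn⟩
        rwa [hc] at hjS
      · push_neg at hC
        obtain ⟨i, hiI, hia⟩ := hC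
        have hin : i < n := Finset.mem_range.1 (hunion ▸ Finset.mem_union_left J hiI)
        apply Finset.prod_eq_zero (Finset.mem_univ (⟨i, hin⟩ : Fin n))
        rw [if_pos hiI, if_neg]
        have hc : (phiP b).coeff i = b ⟨i, hin⟩ := phiP_coeff_lt b ⟨i, hin⟩
        rwa [hc] at hia
  -- Step 3: separate variables
  have h2 : FhatC p (Cset n I J a S) n θ
      = psiChar p (θ.coeff (1 + n)) *
        ∏ i : Fin n, ∑ x : F,
          (if (i : ℕ) ∈ I then (if x = a i then (1:ℂ) else 0)
            else (if x ∈ S i then 0 else 1)) * psiChar p (x * θ.coeff (1 + (i : ℕ))) := by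
    rw [h1]
    rw [Finset.prod_univ_sum, Fintype.piFinset_univ, Finset.mul_sum]
    refine Finset.sum_congr rfl fun b _ => ?_
    rw [hind b, eInf_toInf_phiP, Finset.prod_mul_distrib]
    ring
  -- Step 4: bound each factor
  have hbound : ∀ i : Fin n,
      ‖(∑ x : F,
          (if (i : ℕ) ∈ I then (if x = a i then (1:ℂ) else 0)
            else (if x ∈ S i then 0 else 1)) * psiChar p (x * θ.coeff (1 + (i : ℕ))))‖
        ≤ (if (i : ℕ) ∈ I then (1:ℝ)
            else (if θ.coeff (1 + ((i : ℕ) : ℤ)) = 0 then (q : ℝ) else ((S (i : ℕ)).card : ℝ))) := by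
    intro i
    set c : F := θ.coeff (1 + ((i : ℕ) : ℤ)) with hcdef
    by_cases hi : (i : ℕ) ∈ I
    · simp only [if_pos hi]
      have hsum : ∑ x : F, (if x = a (i : ℕ) then (1:ℂ) else 0) * psiChar p (x * c)
          = psiChar p (a (i : ℕ) * c) := by
        rw [Finset.sum_eq_single (a (i : ℕ))]
        · rw [if_pos rfl, one_mul]
        · intro x _ hx; rw [if_neg hx, zero_mul]
        · intro hx; exact absurd (Finset.mem_univ _) hx
      rw [hsum, psiChar_abs]
    · simp only [if_neg hi]
      by_cases hc : c = 0
      · rw [if_pos hc]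
        have hsum : ∑ x : F, (if x ∈ S (i : ℕ) then (0:ℂ) else 1) * psiChar p (x * c)
            = ((Finset.univ.filter (fun x : F => x ∉ S (i : ℕ))).card : ℂ) := by
          have he : ∀ x : F, (if x ∈ S (i : ℕ) then (0:ℂ) else 1) * psiChar p (x * c)
              = if x ∉ S (i : ℕ) then (1:ℂ) else 0 := by
            intro x
            rw [hc, mul_zero, psiChar_zero, mul_one, ite_not]
          simp_rw [he]
          exact Finset.sum_boole _ _
        rw [hsum, Complex.norm_natCast]
        have hle : (Finset.univ.filter (fun x : F => x ∉ S (i : ℕ))).card ≤ q := by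
          rw [hq]
          exact le_trans (Finset.card_filter_le _ _) (le_of_eq (Finset.card_univ))
        exact_mod_cast hle
      · rw [if_neg hc]
        have hsum : ∑ x : F, (if x ∈ S (i : ℕ) then (0:ℂ) else 1) * psiChar p (x * c)
            = - ∑ x ∈ S (i : ℕ), psiChar p (x * c) := by
          have h0 : ∑ x : F, psiChar p (x * c) = 0 := sum_psiChar_eq_zero p hc
          have he : ∀ x : F, (if x ∈ S (i : ℕ) then (0:ℂ) else 1) * psiChar p (x * c)
              = psiChar p (x * c) - (if x ∈ S (i : ℕ) then psiChar p (x * c) else 0) := by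
            intro x; split_ifs <;> ring
          simp_rw [he]
          rw [Finset.sum_sub_distrib, h0, zero_sub]
          congr 1
          rw [Finset.sum_ite_mem, Finset.univ_inter]
        rw [hsum, norm_neg]
        calc ‖(∑ x ∈ S (i : ℕ), psiChar p (x * c))‖
            ≤ ∑ x ∈ S (i : ℕ), ‖(psiChar p (x * c))‖ := norm_sum_le _ _
          _ = ((S (i : ℕ)).card : ℝ) := by
              rw [Finset.sum_congr rfl fun x _ => psiChar_abs p (x * c),
                Finset.sum_const, nsmul_eq_mul, mul_one]
  -- Step 5: combine everything
  rw [h2, norm_mul, psiChar_abs, one_mul, norm_prod]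
  have hB : ∀ m : ℕ, True := fun _ => trivial
  set B : ℕ → ℝ := fun m => if m ∈ I then (1:ℝ)
      else (if θ.coeff (1 + (m : ℤ)) = 0 then (q : ℝ) else ((S m).card : ℝ)) with hBdef
  calc ∏ i : Fin n, ‖(∑ x : F,
          (if (i : ℕ) ∈ I then (if x = a (i : ℕ) then (1:ℂ) else 0)
            else (if x ∈ S (i : ℕ) then 0 else 1)) * psiChar p (x * θ.coeff (1 + ((i : ℕ) : ℤ))))‖
      ≤ ∏ i : Fin n, B (i : ℕ) :=
        Finset.prod_le_prod (fun i _ => norm_nonneg _) (fun i _ => hbound i)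
    _ = ∏ m ∈ Finset.range n, B m := Fin.prod_univ_eq_prod_range B n
    _ = ∏ m ∈ I ∪ J, B m := by rw [hunion]
    _ = (∏ m ∈ I, B m) * (∏ m ∈ J, B m) := Finset.prod_union hdisj
    _ = ∏ m ∈ J, B m := by
        rw [Finset.prod_eq_one fun m hm => if_pos hm, one_mul]
    _ = (∏ m ∈ J.filter (fun m : ℕ => coeffT θ (-(m : ℤ) - 1) ≠ 0), B m)
        * (∏ m ∈ J.filter (fun m : ℕ => ¬ coeffT θ (-(m : ℤ) - 1) ≠ 0), B m) :=
        (Finset.prod_filter_mul_prod_filter_not J _ B).symm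
    _ = (∏ i ∈ J.filter (fun i : ℕ => coeffT θ (-(i : ℤ) - 1) ≠ 0), ((S i).card : ℝ)) *
        (∏ _i ∈ J.filter (fun i : ℕ => coeffT θ (-(i : ℤ) - 1) = 0), (q : ℝ)) := by
        congr 1
        · refine Finset.prod_congr rfl fun m hm => ?_
          rw [Finset.mem_filter] at hm
          obtain ⟨hmJ, hmne⟩ := hm
          have hmI : m ∉ I := fun hmi => (Finset.disjoint_left.1 hdisj hmi) hmJ
          rw [hBdef]
          simp only []
          rw [if_neg hmI, if_neg (by rw [← hco m]; exact hmne)]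
        · have hfe : J.filter (fun m : ℕ => ¬ coeffT θ (-(m : ℤ) - 1) ≠ 0)
              = J.filter (fun i : ℕ => coeffT θ (-(i : ℤ) - 1) = 0) := by
            apply Finset.filter_congr
            intro m _
            simp [not_not]
          rw [hfe]
          refine Finset.prod_congr rfl fun m hm => ?_
          rw [Finset.mem_filter] at hm
          obtain ⟨hmJ, hmz⟩ := hm
          have hmI : m ∉ I := fun hmi => (Finset.disjoint_left.1 hdisj hmi) hmJ
          rw [hBdef]
          simp only []
          rw [if_neg hmI, if_pos (by rw [← hco m]; exact hmz)]

end
end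

section
/- Let n ≥ 2. Then Σ_{F ∈ M_n} |F̂_{q,n}(T^{−n}F)| ≤ α(n − I)·q^n. -/
/- Common setup: the field `F_q(T)_∞` of formal Laurent series in `1/T` is realized as
`LaurentSeries F` in the variable `X = 1/T`; the coefficient of `T^l` is the
`X`-coefficient at `-l`. -/

noncomputable section
open Polynomial Finset Filter
open scoped Classical

variable {F : Type} [Field F]

namespace FhatAux

open HahnSeries

variable {F : Type} [Field F]

lemma toInf_monomial (k : ℕ) (b : F) :
    toInf (Polynomial.monomial k b) = HahnSeries.single (-(k:ℤ)) b := by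
  rw [toInf, Polynomial.aeval_monomial]
  have h1 : (Tinf F) ^ k = HahnSeries.single (-(k:ℤ)) (1:F) := by
    rw [Tinf, HahnSeries.single_pow, one_pow]
    congr 1
    simp
  have h2 : (algebraMap F (LaurentSeries F)) b = HahnSeries.single (0:ℤ) b := by
    rw [HahnSeries.algebraMap_apply', PowerSeries.algebraMap_apply]
    simp only [Algebra.algebraMap_self, RingHom.id_apply, HahnSeries.ofPowerSeries_C,
      HahnSeries.C_apply]
  rw [h1, h2, HahnSeries.single_mul_single, zero_add, mul_one]

lemma toInf_coeff (Q : Polynomial F) (j : ℕ) : (toInf Q).coeff (-(j:ℤ)) = Q.coeff j := by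
  induction Q using Polynomial.induction_on' with
  | add P R hP hR =>
    have : toInf (P + R) = toInf P + toInf R := by rw [toInf, toInf, toInf, map_add]
    rw [this, HahnSeries.coeff_add, hP, hR, Polynomial.coeff_add]
  | monomial k b =>
    rw [toInf_monomial, HahnSeries.coeff_single, Polynomial.coeff_monomial]
    by_cases h : j = k
    · subst h; simp
    · rw [if_neg, if_neg (fun hh => h hh.symm)]
      intro hh
      exact h (by exact_mod_cast neg_inj.mp hh)

lemma toInf_mul (P R : Polynomial F) : toInf (P * R) = toInf P * toInf R := by
  rw [toInf, toInf, toInf, map_mul]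

lemma Tinf_zpow_neg (n : ℕ) : (Tinf F) ^ (-(n:ℤ)) = HahnSeries.single (n:ℤ) (1:F) := by
  have hpow : (Tinf F) ^ n = HahnSeries.single (-(n:ℤ)) (1:F) := by
    rw [Tinf, HahnSeries.single_pow, one_pow]
    congr 1
    simp
  rw [zpow_neg, zpow_natCast, hpow]
  apply inv_eq_of_mul_eq_one_left
  rw [HahnSeries.single_mul_single, one_mul, add_neg_cancel]
  exact HahnSeries.single_zero_one

lemma eInf_key (p : ℕ) [CharP F p] [Algebra (ZMod p) F] (n : ℕ) (hn : 1 ≤ n)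
    (G P : Polynomial F) :
    eInf p (toInf G * ((Tinf F) ^ (-(n:ℤ)) * toInf P)) = psiChar p ((G * P).coeff (n-1)) := by
  have h1 : toInf G * ((Tinf F) ^ (-(n:ℤ)) * toInf P)
      = (Tinf F) ^ (-(n:ℤ)) * toInf (G * P) := by
    rw [toInf_mul]; ring
  rw [eInf, h1, Tinf_zpow_neg, coeffT, neg_neg]
  have h2 : (1:ℤ) = (1 - n) + (n:ℤ) := by ring
  rw [h2, HahnSeries.coeff_single_mul_add, one_mul]
  have h3 : (1 - (n:ℤ)) = -(((n-1:ℕ)):ℤ) := by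
    push_cast [Nat.cast_sub hn]
    ring
  rw [h3, toInf_coeff]

variable (n : ℕ)

/-- The polynomial `X^n + ∑ c_i X^i`. -/
def polOf (c : Fin n → F) : Polynomial F :=
  Polynomial.X ^ n + ∑ i : Fin n, Polynomial.C (c i) * Polynomial.X ^ (i:ℕ)

lemma polOf_err_degree_lt (c : Fin n → F) :
    (∑ i : Fin n, Polynomial.C (c i) * Polynomial.X ^ (i:ℕ)).degree < (n : WithBot ℕ) := by
  apply lt_of_le_of_lt (Polynomial.degree_sum_le _ _)
  rw [Finset.sup_lt_iff]
  · intro i _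
    exact lt_of_le_of_lt (Polynomial.degree_C_mul_X_pow_le _ _) (by exact_mod_cast i.2)
  · exact (bot_lt_iff_ne_bot).2 (by simp)

lemma polOf_monic (c : Fin n → F) : (polOf n c).Monic :=
  Polynomial.monic_X_pow_add (polOf_err_degree_lt n c)

lemma polOf_natDegree (c : Fin n → F) : (polOf n c).natDegree = n := by
  have : (polOf n c).degree = n := by
    rw [polOf, add_comm, Polynomial.degree_add_eq_right_of_degree_lt]
    · exact Polynomial.degree_X_pow n
    · rw [Polynomial.degree_X_pow]; exact polOf_err_degree_lt n c
  exact Polynomial.natDegree_eq_of_degree_eq_some this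

lemma polOf_coeff (c : Fin n → F) (j : ℕ) (hj : j < n) :
    (polOf n c).coeff j = c ⟨j, hj⟩ := by
  rw [polOf, Polynomial.coeff_add, Polynomial.coeff_X_pow, if_neg hj.ne, zero_add,
    Polynomial.finset_sum_coeff]
  rw [Finset.sum_eq_single (⟨j, hj⟩ : Fin n)]
  · simp
  · intro i _ hi
    rw [Polynomial.coeff_C_mul, Polynomial.coeff_X_pow, if_neg, mul_zero]
    intro hh
    exact hi (Fin.ext hh.symm)
  · simp

lemma polOf_injective : Function.Injective (polOf (F := F) n) := by
  intro c c' h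
  funext i
  have := congrArg (fun P => Polynomial.coeff P (i:ℕ)) h
  simpa [polOf_coeff n _ _ i.2] using this

lemma Mset_eq_range : Mset F n = Set.range (polOf (F := F) n) := by
  ext P
  constructor
  · rintro ⟨hm, hd⟩
    refine ⟨fun i => P.coeff (i:ℕ), ?_⟩
    apply Polynomial.ext
    intro j
    rcases lt_trichotomy j n with h | h | h
    · rw [polOf_coeff n _ j h]
    · have h1 := (polOf_monic n (fun i => P.coeff (i:ℕ))).coeff_natDegree
      rw [polOf_natDegree] at h1
      have h2 := hm.coeff_natDegree
      rw [hd] at h2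
      rw [h, h1, h2]
    · rw [Polynomial.coeff_eq_zero_of_natDegree_lt (by rw [polOf_natDegree]; exact h),
        Polynomial.coeff_eq_zero_of_natDegree_lt (by rw [hd]; exact h)]
  · rintro ⟨c, rfl⟩
    exact ⟨polOf_monic n c, polOf_natDegree n c⟩

lemma finsum_Mset {M : Type*} [AddCommMonoid M] [Fintype F] (f : Polynomial F → M) :
    (∑ᶠ G ∈ Mset F n, f G) = ∑ c : Fin n → F, f (polOf n c) := by
  rw [Mset_eq_range, finsum_mem_range (polOf_injective n), finsum_eq_sum_of_fintype]

section Psi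

variable (p : ℕ) [Fact p.Prime] [CharP F p] [Algebra (ZMod p) F]

lemma exp_nat_mod (k : ℕ) :
    Complex.exp (2 * Real.pi * Complex.I * (((k % p : ℕ)) : ℂ) / p) =
    Complex.exp (2 * Real.pi * Complex.I * ((k : ℕ) : ℂ) / p) := by
  have hp : (p : ℂ) ≠ 0 := by
    exact_mod_cast (Fact.out : p.Prime).ne_zero
  set m : ℕ := k / p with hmdef
  have hk : ((k : ℕ) : ℂ) = (p : ℂ) * (m : ℂ) + (((k % p : ℕ)) : ℂ) := by
    exact_mod_cast congrArg (Nat.cast : ℕ → ℂ) (Nat.div_add_mod k p).symm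
  rw [hk, mul_add, add_div, Complex.exp_add]
  have h1 : 2 * (Real.pi : ℂ) * Complex.I * ((p : ℂ) * (m : ℂ)) / p
      = ((m : ℤ) : ℂ) * (2 * Real.pi * Complex.I) := by
    push_cast
    field_simp
  rw [h1, Complex.exp_int_mul_two_pi_mul_I, one_mul]

/-- `psiChar` as an additive character. -/
def psiA : AddChar F ℂ where
  toFun := psiChar p
  map_zero_eq_one' := by
    simp [psiChar]
  map_add_eq_mul' := by
    intro x y
    have : NeZero p := ⟨(Fact.out : p.Prime).ne_zero⟩
    unfold psiChar
    rw [map_add, ZMod.val_add, exp_nat_mod p, ← Complex.exp_add]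
    congr 1
    push_cast
    ring

lemma psiA_apply (x : F) : psiA p x = psiChar p x := rfl

lemma psiA_abs (x : F) : ‖psiA p x‖ = 1 := by
  rw [psiA_apply, psiChar]
  have : 2 * (Real.pi : ℂ) * Complex.I * ((((Algebra.trace (ZMod p) F) x).val : ℕ) : ℂ) / p
      = ((2 * Real.pi * (((Algebra.trace (ZMod p) F) x).val : ℝ) / p : ℝ) : ℂ) * Complex.I := by
    push_cast
    ring
  rw [this, Complex.norm_exp_ofReal_mul_I]

variable [Fintype F]

lemma psiA_ne_one : psiA (F := F) p ≠ 1 := by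
  have : NeZero p := ⟨(Fact.out : p.Prime).ne_zero⟩
  haveI : FiniteDimensional (ZMod p) F := Module.finite_iff_finite.mpr (Finite.of_fintype F)
  obtain ⟨x, hx⟩ := Algebra.trace_surjective (ZMod p) F 1
  intro h
  have h1 : psiA (F := F) p x = 1 := by rw [h]; rfl
  rw [psiA_apply, psiChar, hx] at h1
  have hval : ((1 : ZMod p)).val = 1 := ZMod.val_one_eq_one_mod p ▸ Nat.mod_eq_of_lt (Fact.out : p.Prime).one_lt
  rw [hval] at h1
  obtain ⟨m, hm⟩ := Complex.exp_eq_one_iff.mp h1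
  have hp : (p : ℂ) ≠ 0 := by exact_mod_cast (Fact.out : p.Prime).ne_zero
  have hpi : (2 : ℂ) * Real.pi * Complex.I ≠ 0 := by
    simp [Real.pi_ne_zero, Complex.I_ne_zero]
  have h2 : (1 : ℂ) = (m : ℂ) * p := by
    have e1 : 2 * (Real.pi : ℂ) * Complex.I * (((1:ℕ)) : ℂ) / (p:ℂ) * (p:ℂ)
        = ((m:ℂ) * (2 * Real.pi * Complex.I)) * p := by rw [hm]
    rw [div_mul_cancel₀ _ hp] at e1
    have e2 : (2 * (Real.pi:ℂ) * Complex.I) * 1 = (2 * (Real.pi:ℂ) * Complex.I) * ((m:ℂ) * p) := by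
      push_cast at e1
      linear_combination e1
    exact mul_left_cancel₀ hpi e2
  have h3 : (1 : ℤ) = m * p := by exact_mod_cast h2
  have hp2 : 2 ≤ (p : ℤ) := by exact_mod_cast (Fact.out : p.Prime).two_le
  rcases le_or_gt m 0 with hm0 | hm0
  · nlinarith
  · nlinarith

lemma psiA_sum_mul (x : F) (hx : x ≠ 0) : ∑ c : F, psiA p (c * x) = 0 := by
  have h1 : ∑ c : F, psiA p (c * x) = ∑ c : F, psiA p c :=
    Fintype.sum_equiv (Equiv.mulRight₀ x hx) _ _ (fun c => rfl)
  rw [h1]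
  exact AddChar.sum_eq_zero_of_ne_one (psiA_ne_one p)

end Psi

section Sums

variable (p : ℕ) [Fact p.Prime] [CharP F p] [Algebra (ZMod p) F] [Fintype F]

lemma psiA_map_sum {ι : Type*} (s : Finset ι) (f : ι → F) :
    psiA p (∑ i ∈ s, f i) = ∏ i ∈ s, psiA p (f i) := by
  induction s using Finset.cons_induction with
  | empty => simp
  | cons i s hi ih =>
    rw [Finset.sum_cons, Finset.prod_cons, AddChar.map_add_eq_mul, ih]

/-- The single-coefficient character sum. -/
def sfun (Cc : Set F) (x : F) : ℂ :=
  ∑ c : F, Set.indicator Cc (fun _ => (1:ℂ)) c * psiA p (c * x)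

lemma sfun_singleton (b : F) (x : F) : sfun p {b} x = psiA p (b * x) := by
  rw [sfun, Finset.sum_eq_single b]
  · rw [Set.indicator_of_mem (Set.mem_singleton b), one_mul]
  · intro c _ hc
    rw [Set.indicator_of_notMem (by simpa using hc), zero_mul]
  · intro h
    exact absurd (Finset.mem_univ b) h

lemma sum_abs_sfun_singleton (b : F) :
    ∑ x : F, ‖sfun p {b} x‖ = (Fintype.card F : ℝ) := by
  have : ∀ x : F, ‖sfun p {b} x‖ = 1 := fun x => by
    rw [sfun_singleton, psiA_abs]
  rw [Finset.sum_congr rfl (fun x _ => this x), Finset.sum_const, Finset.card_univ,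
    nsmul_eq_mul, mul_one]

lemma sfun_compl (s : Finset F) (x : F) :
    sfun p {b | b ∉ s} x = (∑ c : F, psiA p (c * x)) - ∑ c ∈ s, psiA p (c * x) := by
  have h1 : ∀ c : F, Set.indicator {b | b ∉ s} (fun _ => (1:ℂ)) c
      = 1 - Set.indicator (↑s) (fun _ => (1:ℂ)) c := by
    intro c
    by_cases hc : c ∈ s <;> simp [Set.indicator_apply, hc]
  have h2 : (∑ c : F, Set.indicator (↑s) (fun _ => (1:ℂ)) c * psiA p (c * x))
      = ∑ c ∈ s, psiA p (c * x) := by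
    simp only [Set.indicator_apply, Finset.mem_coe, ite_mul, one_mul, zero_mul]
    rw [Finset.sum_ite_mem, Finset.univ_inter]
  rw [sfun, Finset.sum_congr rfl (fun c _ => by rw [h1 c, sub_mul, one_mul]),
    Finset.sum_sub_distrib, h2]

lemma abs_sum_psiA_le (s : Finset F) (x : F) :
    ‖∑ c ∈ s, psiA p (c * x)‖ ≤ (s.card : ℝ) := by
  refine le_trans (norm_sum_le _ _) ?_
  rw [Finset.sum_congr rfl (fun c _ => psiA_abs p (c * x)), Finset.sum_const,
    nsmul_eq_mul, mul_one]

lemma sum_abs_sfun_compl (s : Finset F) :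
    ∑ x : F, ‖sfun p {b | b ∉ s} x‖
      ≤ (Fintype.card F : ℝ) * (s.card + 1) := by
  set q : ℕ := Fintype.card F
  have hq1 : 1 ≤ q := Fintype.card_pos
  have h0 : ‖sfun p {b | b ∉ s} 0‖ ≤ (q : ℝ) + s.card := by
    have hA : (∑ c : F, psiA p (c * 0)) = (q : ℂ) := by
      rw [Finset.sum_congr rfl (fun c _ => by rw [mul_zero, AddChar.map_zero_eq_one]),
        Finset.sum_const, Finset.card_univ, nsmul_eq_mul, mul_one]
    rw [sfun_compl, sub_eq_add_neg]
    refine le_trans (norm_add_le _ _) ?_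
    rw [norm_neg, hA, Complex.norm_natCast]
    exact add_le_add_right (abs_sum_psiA_le p s 0) _
  have hx : ∀ x : F, x ≠ 0 → ‖sfun p {b | b ∉ s} x‖ ≤ (s.card : ℝ) := by
    intro x hxne
    rw [sfun_compl, psiA_sum_mul p x hxne, zero_sub, norm_neg]
    exact abs_sum_psiA_le p s x
  have hsplit : ∑ x : F, ‖sfun p {b | b ∉ s} x‖
      = ‖sfun p {b | b ∉ s} 0‖
        + ∑ x ∈ Finset.univ.erase 0, ‖sfun p {b | b ∉ s} x‖ := by
    rw [← Finset.add_sum_erase _ _ (Finset.mem_univ (0:F))]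
  rw [hsplit]
  have herase : ∑ x ∈ Finset.univ.erase (0:F), ‖sfun p {b | b ∉ s} x‖
      ≤ ((q - 1 : ℕ) : ℝ) * s.card := by
    refine le_trans (Finset.sum_le_sum (fun x hxx =>
      hx x (Finset.ne_of_mem_erase hxx))) ?_
    rw [Finset.sum_const, Finset.card_erase_of_mem (Finset.mem_univ _), Finset.card_univ,
      nsmul_eq_mul]
  refine le_trans (add_le_add h0 herase) ?_
  rw [Nat.cast_sub hq1]
  push_cast
  apply le_of_eq
  ring

end Sums

section Main

variable (p : ℕ) [Fact p.Prime] [CharP F p] [Algebra (ZMod p) F]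

lemma coeff_mul_polOf (n : ℕ) (hn1 : 1 ≤ n) (c d : Fin n → F) :
    (polOf n c * polOf n d).coeff (n - 1) = ∑ i : Fin n, c i * d (Fin.rev i) := by
  have hs : (n - 1).succ = n := by omega
  rw [Polynomial.coeff_mul, Finset.Nat.sum_antidiagonal_eq_sum_range_succ_mk, hs,
    ← Fin.sum_univ_eq_sum_range (fun k => (polOf n c).coeff k * (polOf n d).coeff (n - 1 - k)) n]
  refine Finset.sum_congr rfl (fun i _ => ?_)
  have h1 : n - 1 - (i : ℕ) < n := by omega
  rw [polOf_coeff n c _ i.2, polOf_coeff n d _ h1]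
  have : (⟨n - 1 - (i : ℕ), h1⟩ : Fin n) = Fin.rev i := by
    refine Fin.ext ?_
    rw [Fin.val_rev]
    show n - 1 - (i : ℕ) = n - ((i : ℕ) + 1)
    omega
  rw [this]

lemma ind_factor (n : ℕ) (I J : Finset ℕ) (hdisj : Disjoint I J)
    (hunion : I ∪ J = Finset.range n) (a : ℕ → F) (S : ℕ → Finset F) (c : Fin n → F) :
    Set.indicator (Cset n I J a S) (fun _ => (1:ℂ)) (polOf n c)
      = ∏ i : Fin n, Set.indicator (Ccon I a S (i : ℕ)) (fun _ => (1:ℂ)) (c i) := by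
  by_cases h : ∀ i : Fin n, c i ∈ Ccon I a S (i : ℕ)
  · rw [Set.indicator_of_mem, Finset.prod_congr rfl
      (fun i _ => Set.indicator_of_mem (h i) _), Finset.prod_const_one]
    refine ⟨polOf_monic n c, polOf_natDegree n c, ?_, ?_⟩
    · intro i hi
      have hilt : i < n := Finset.mem_range.mp (hunion ▸ Finset.mem_union_left J hi)
      have := h ⟨i, hilt⟩
      rw [Ccon, if_pos hi] at this
      rw [polOf_coeff n c i hilt]
      exact this
    · intro j hj
      have hjlt : j < n := Finset.mem_range.mp (hunion ▸ Finset.mem_union_right I hj)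
      have hjI : j ∉ I := Finset.disjoint_right.mp hdisj hj
      have := h ⟨j, hjlt⟩
      rw [Ccon, if_neg hjI] at this
      rw [polOf_coeff n c j hjlt]
      exact this
  · push_neg at h
    obtain ⟨i₀, hi₀⟩ := h
    rw [Set.indicator_of_notMem, Finset.prod_eq_zero (Finset.mem_univ i₀)
      (Set.indicator_of_notMem hi₀ _)]
    rintro ⟨-, -, hI, hJ⟩
    have hmem : (i₀ : ℕ) ∈ Finset.range n := Finset.mem_range.mpr i₀.2
    rw [← hunion] at hmem
    rcases Finset.mem_union.mp hmem with hiI | hiJ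
    · refine hi₀ ?_
      rw [Ccon, if_pos hiI]
      have := hI (i₀ : ℕ) hiI
      rw [polOf_coeff n c _ i₀.2] at this
      simpa using this
    · refine hi₀ ?_
      rw [Ccon, if_neg (Finset.disjoint_right.mp hdisj hiJ)]
      have := hJ (i₀ : ℕ) hiJ
      rw [polOf_coeff n c _ i₀.2] at this
      simpa using this

end Main

end FhatAux

/-- Proposition: `Σ_{F ∈ M_n} |F̂_{q,n}(T^{−n}F)| ≤ α(n − I)·q^n`. -/
theorem fhat_general_bound (F : Type) [Field F] [Fintype F]
    (p : ℕ) [Fact p.Prime] [CharP F p] [Algebra (ZMod p) F]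
    (q : ℕ) (hq : q = Fintype.card F)
    (n : ℕ) (hn : 2 ≤ n) (I J : Finset ℕ)
    (hdisj : Disjoint I J) (hunion : I ∪ J = Finset.range n)
    (a : ℕ → F) (S : ℕ → Finset F) :
    (∑ᶠ P ∈ Mset F n,
        ‖FhatC p (Cset n I J a S) n ((Tinf F) ^ (-(n : ℤ)) * toInf P)‖) ≤
      (alphaJ J S (n - I.card) : ℝ) * (q : ℝ) ^ n := by
  classical
  subst hq
  have hn1 : 1 ≤ n := le_trans one_le_two hn
  rw [FhatAux.finsum_Mset]
  have hFh : ∀ d : Fin n → F,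
      FhatC p (Cset n I J a S) n ((Tinf F) ^ (-(n : ℤ)) * toInf (FhatAux.polOf n d))
        = ∏ i : Fin n, FhatAux.sfun p (Ccon I a S (i : ℕ)) (d (Fin.rev i)) := by
    intro d
    rw [FhatC, FhatAux.finsum_Mset]
    have hterm : ∀ c : Fin n → F,
        Set.indicator (Cset n I J a S) (fun _ => (1:ℂ)) (FhatAux.polOf n c) *
          eInf p (toInf (FhatAux.polOf n c) *
            ((Tinf F) ^ (-(n : ℤ)) * toInf (FhatAux.polOf n d)))
          = ∏ i : Fin n,
              (Set.indicator (Ccon I a S (i : ℕ)) (fun _ => (1:ℂ)) (c i) *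
                FhatAux.psiA p (c i * d (Fin.rev i))) := by
      intro c
      rw [FhatAux.eInf_key p n hn1, FhatAux.coeff_mul_polOf n hn1,
        ← FhatAux.psiA_apply, FhatAux.psiA_map_sum,
        FhatAux.ind_factor n I J hdisj hunion a S c, ← Finset.prod_mul_distrib]
    rw [Finset.sum_congr rfl (fun c _ => hterm c),
      ← Fintype.prod_sum (fun (i : Fin n) (y : F) =>
        Set.indicator (Ccon I a S (i : ℕ)) (fun _ => (1:ℂ)) y *
          FhatAux.psiA p (y * d (Fin.rev i)))]
    rfl
  have hstep1 : (∑ d : Fin n → F,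
        ‖FhatC p (Cset n I J a S) n
          ((Tinf F) ^ (-(n : ℤ)) * toInf (FhatAux.polOf n d))‖)
      = ∏ i : Fin n, ∑ y : F, ‖FhatAux.sfun p (Ccon I a S (i : ℕ)) y‖ := by
    rw [Finset.sum_congr rfl (fun d _ => by
      rw [hFh d, norm_prod])]
    have hre : (∑ d : Fin n → F,
          ∏ i : Fin n, ‖FhatAux.sfun p (Ccon I a S (i : ℕ)) (d (Fin.rev i))‖)
        = ∑ d : Fin n → F,
            ∏ i : Fin n, ‖FhatAux.sfun p (Ccon I a S (i : ℕ)) (d i)‖ := by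
      refine Fintype.sum_equiv (Equiv.arrowCongr Fin.revPerm (Equiv.refl F)) _ _ (fun d => ?_)
      refine Finset.prod_congr rfl (fun i _ => ?_)
      simp [Equiv.arrowCongr]
    rw [hre, ← Fintype.prod_sum (fun (i : Fin n) (y : F) =>
      ‖FhatAux.sfun p (Ccon I a S (i : ℕ)) y‖)]
  rw [hstep1]
  have hbound : ∀ i : Fin n,
      (∑ y : F, ‖FhatAux.sfun p (Ccon I a S (i : ℕ)) y‖)
        ≤ (Fintype.card F : ℝ) * (if (i : ℕ) ∈ I then (1:ℝ) else ((S (i:ℕ)).card + 1)) := by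
    intro i
    by_cases hiI : (i : ℕ) ∈ I
    · have hc : Ccon I a S (i : ℕ) = {a (i : ℕ)} := by rw [Ccon, if_pos hiI]
      rw [hc, FhatAux.sum_abs_sfun_singleton, if_pos hiI, mul_one]
    · have hc : Ccon I a S (i : ℕ) = {b | b ∉ S (i : ℕ)} := by rw [Ccon, if_neg hiI]
      rw [hc, if_neg hiI]
      exact FhatAux.sum_abs_sfun_compl p (S (i : ℕ))
  refine le_trans (Finset.prod_le_prod (fun i _ => Finset.sum_nonneg
    (fun y _ => norm_nonneg _)) (fun i _ => hbound i)) ?_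
  rw [Finset.prod_mul_distrib, Finset.prod_const, Finset.card_univ, Fintype.card_fin]
  have hprod : (∏ i : Fin n, (if (i : ℕ) ∈ I then (1:ℝ) else ((S (i:ℕ)).card + 1)))
      = ((∏ j ∈ J, ((S j).card + 1) : ℕ) : ℝ) := by
    rw [Fin.prod_univ_eq_prod_range (fun k => (if k ∈ I then (1:ℝ) else ((S k).card + 1))) n]
    rw [← hunion, Finset.prod_union hdisj]
    rw [Finset.prod_congr rfl (fun k hk => if_pos hk), Finset.prod_const_one, one_mul]
    rw [Finset.prod_congr rfl (fun k hk => if_neg (Finset.disjoint_right.mp hdisj hk))]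
    push_cast
    rfl
  rw [hprod]
  have hJcard : J.card = n - I.card := by
    have h1 : I.card + J.card = n := by
      rw [← Finset.card_union_of_disjoint hdisj, hunion, Finset.card_range]
    omega
  have halpha : (∏ j ∈ J, ((S j).card + 1)) ≤ alphaJ J S (n - I.card) := by
    rw [alphaJ]
    exact Finset.le_sup (f := fun s => ∏ i ∈ s, ((S i).card + 1)) (Finset.mem_powersetCard.mpr ⟨Finset.Subset.refl J, hJcard⟩)
  rw [mul_comm]
  refine mul_le_mul_of_nonneg_right ?_ (by positivity)
  exact_mod_cast halpha

end
end

section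
/- Let 1 ≤ l ≤ n, 0 ≤ x ≤ n − l, and θ ∈ U. Set K = {x, …, x+l−1}, K̄ = {0,…,n−1} \ K, Z_{∉K}(θ) = Z(θ) ∩ K̄, N_{∉K}(θ) = N(θ) ∩ K̄, and α_{∉K}(m) = sup over i_1 < … < i_m in 𝓙 ∩ K̄ of Π_{j=1}^m (N_{i_j}+1). Then |F̂_{q,n}(θ)| ≤ α_{∉K}(#N_{∉K}(θ))·q^{#Z_{∉K}(θ)}·|F̂_{q,l}(T^x θ)|, where F̂_{q,l} is the Fourier transform of the degree-l constrained family with constraint sets C_x, …, C_{x+l−1}, i.e. F̂_{q,l}(η) = Σ_{G ∈ M_l} (Π_{i=0}^{l−1} 1_{C_{x+i}}(g_i))·e(Gη) with G = T^l + Σ g_i T^i. -/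
/- Common setup: the field `F_q(T)_∞` of formal Laurent series in `1/T` is realized as
`LaurentSeries F` in the variable `X = 1/T`; the coefficient of `T^l` is the
`X`-coefficient at `-l`. -/

noncomputable section
open Polynomial Finset Filter
open scoped Classical

variable {F : Type} [Field F]

namespace FWBaux

variable {F : Type} [Field F] (p : ℕ) [hp : Fact p.Prime] [CharP F p] [Algebra (ZMod p) F]

lemma exp_mod (m : ℕ) :
    Complex.exp (2 * Real.pi * Complex.I * ((m % p : ℕ) : ℂ) / p) =
      Complex.exp (2 * Real.pi * Complex.I * (m : ℂ) / p) := by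
  have hp0 : (p : ℂ) ≠ 0 := Nat.cast_ne_zero.mpr hp.out.pos.ne'
  have h : (m : ℂ) = ((m % p : ℕ) : ℂ) + (p : ℂ) * ((m / p : ℕ) : ℂ) := by
    exact_mod_cast congrArg (Nat.cast : ℕ → ℂ) (Nat.mod_add_div m p).symm
  have h2 : 2 * (Real.pi : ℂ) * Complex.I * (m : ℂ) / p
      = 2 * (Real.pi : ℂ) * Complex.I * ((m % p : ℕ) : ℂ) / p
        + ((m / p : ℕ) : ℂ) * (2 * (Real.pi : ℂ) * Complex.I) := by
    rw [h]; field_simp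
  rw [h2, Complex.exp_add,
    show ((m / p : ℕ) : ℂ) = (((m / p : ℕ) : ℤ) : ℂ) by norm_cast,
    Complex.exp_int_mul_two_pi_mul_I, mul_one]

lemma psiChar_zero : psiChar p (0 : F) = 1 := by
  simp [psiChar]

lemma psiChar_add (a b : F) : psiChar p (a + b) = psiChar p a * psiChar p b := by
  haveI : NeZero p := ⟨hp.out.ne_zero⟩
  unfold psiChar
  rw [map_add]
  set x := Algebra.trace (ZMod p) F a
  set y := Algebra.trace (ZMod p) F b
  have hv : (x + y).val = (x.val + y.val) % p := ZMod.val_add x y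
  rw [hv, exp_mod p, ← Complex.exp_add]
  congr 1
  push_cast
  ring

lemma abs_psiChar (a : F) : ‖psiChar p a‖ = 1 := by
  unfold psiChar
  set v := ((Algebra.trace (ZMod p) F) a).val
  have h : 2 * (Real.pi : ℂ) * Complex.I * (v : ℂ) / (p : ℂ)
      = ((2 * Real.pi * v / p : ℝ) : ℂ) * Complex.I := by
    push_cast; ring
  rw [h, Complex.norm_exp_ofReal_mul_I]

lemma psiChar_sum {ι : Type*} (s : Finset ι) (f : ι → F) :
    psiChar p (∑ i ∈ s, f i) = ∏ i ∈ s, psiChar p (f i) := by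
  classical
  induction s using Finset.cons_induction with
  | empty => simp [psiChar_zero]
  | cons i s hi ih => rw [Finset.sum_cons, Finset.prod_cons, psiChar_add, ih]

/-- `psiChar` as an additive character. -/
def psiA : AddChar F ℂ where
  toFun := psiChar p
  map_zero_eq_one' := psiChar_zero p
  map_add_eq_mul' := psiChar_add p

lemma exists_psiChar_ne_one [Finite F] : ∃ a : F, psiChar p a ≠ 1 := by
  have hp1 : 1 < p := hp.out.one_lt
  haveI : Fact (1 < p) := ⟨hp1⟩
  haveI : FiniteDimensional (ZMod p) F := Module.Finite.of_finite
  obtain ⟨a, ha⟩ := Algebra.trace_surjective (ZMod p) F 1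
  refine ⟨a, ?_⟩
  unfold psiChar
  rw [ha, ZMod.val_one]
  intro h
  rw [Complex.exp_eq_one_iff] at h
  obtain ⟨k, hk⟩ := h
  have hπ : (2 * (Real.pi : ℂ) * Complex.I) ≠ 0 := by
    simp [Real.pi_ne_zero, Complex.I_ne_zero]
  have hp0 : (p : ℂ) ≠ 0 := Nat.cast_ne_zero.mpr hp.out.pos.ne'
  have h2 : ((1 : ℂ) / p) * (2 * (Real.pi : ℂ) * Complex.I)
      = (k : ℂ) * (2 * (Real.pi : ℂ) * Complex.I) := by
    rw [← hk]; push_cast; ring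
  have h3 : (1 : ℂ) / p = (k : ℂ) := mul_right_cancel₀ hπ h2
  have h4' : (1 : ℂ) = (k : ℂ) * p := by
    rw [← h3]; field_simp
  have h4 : ((1 : ℤ) : ℂ) = ((k * p : ℤ) : ℂ) := by
    push_cast; exact h4'
  have h5 : (1 : ℤ) = k * p := Int.cast_injective h4
  have h6 : (p : ℤ) ∣ 1 := ⟨k, by linarith⟩
  have := Int.le_of_dvd one_pos h6
  omega

lemma sum_psiChar [Fintype F] {c : F} (hc : c ≠ 0) :
    ∑ g : F, psiChar p (g * c) = 0 := by
  obtain ⟨a, ha⟩ := exists_psiChar_ne_one p (F := F)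
  have h0 : AddChar.mulShift (psiA p) c ≠ 0 := by
    have hz : (0 : AddChar F ℂ) = 1 := rfl
    rw [hz, AddChar.ne_one_iff]
    refine ⟨c⁻¹ * a, ?_⟩
    rw [AddChar.mulShift_apply, mul_inv_cancel_left₀ hc]
    exact ha
  have hsum := AddChar.sum_eq_zero_iff_ne_zero.mpr h0
  calc ∑ g : F, psiChar p (g * c) = ∑ g : F, (AddChar.mulShift (psiA p) c) g := by
        refine Finset.sum_congr rfl fun g _ => ?_
        rw [AddChar.mulShift_apply, mul_comm]
        rfl
    _ = 0 := hsum

section Laurent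

lemma Tinf_pow (k : ℕ) : (Tinf F) ^ k = HahnSeries.single (-(k : ℤ)) (1 : F) := by
  rw [Tinf, HahnSeries.single_pow, one_pow]
  congr 1
  simp [nsmul_eq_mul]

lemma coeff_Tpow_mul (k : ℕ) (θ : LaurentSeries F) (m : ℤ) :
    ((Tinf F) ^ k * θ).coeff m = θ.coeff (m + k) := by
  rw [Tinf_pow]
  have h : (m + k) + (-(k : ℤ)) = m := by ring
  have h2 := HahnSeries.coeff_single_mul_add (r := (1 : F)) (x := θ) (a := m + k)
    (b := (-(k : ℤ)))
  rw [h] at h2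
  rw [h2, one_mul]

lemma coeff_term (c : F) (k : ℕ) (θ : LaurentSeries F) :
    (HahnSeries.single (0 : ℤ) c * (Tinf F) ^ k * θ).coeff 1 = c * θ.coeff (1 + k) := by
  rw [Tinf_pow, HahnSeries.single_mul_single, zero_add, mul_one]
  have h : (1 + k) + (-(k : ℤ)) = 1 := by ring
  have h2 := HahnSeries.coeff_single_mul_add (r := c) (x := θ) (a := 1 + (k : ℤ))
    (b := (-(k : ℤ)))
  rw [h] at h2
  exact h2

lemma eInf_def (α : LaurentSeries F) : eInf p α = psiChar p (α.coeff 1) := by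
  rw [eInf, coeffT]
  norm_num

lemma abs_eInf (α : LaurentSeries F) : ‖eInf p α‖ = 1 := by
  rw [eInf_def]; exact abs_psiChar p _

end Laurent

section EE

/-- Parametrization of monic polynomials of degree `n` by coefficient vectors. -/
def ee (n : ℕ) (v : Fin n → F) : Polynomial F :=
  X ^ n + ∑ i : Fin n, C (v i) * X ^ (i : ℕ)

lemma ee_coeff {n : ℕ} (v : Fin n → F) {i : ℕ} (h : i < n) :
    (ee n v).coeff i = v ⟨i, h⟩ := by
  rw [ee, coeff_add, coeff_X_pow, if_neg (by omega : ¬ i = n), zero_add, finset_sum_coeff]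
  rw [Finset.sum_eq_single (⟨i, h⟩ : Fin n)]
  · simp
  · intro b _ hb
    rw [coeff_C_mul, coeff_X_pow, if_neg, mul_zero]
    intro hh
    exact hb (Fin.ext hh.symm)
  · intro h'
    exact absurd (Finset.mem_univ _) h'

lemma ee_deglt {n : ℕ} (v : Fin n → F) :
    (∑ i : Fin n, C (v i) * X ^ (i : ℕ) : Polynomial F).degree < (n : ℕ) := by
  apply lt_of_le_of_lt (Polynomial.degree_sum_le _ _)
  rw [Finset.sup_lt_iff (by exact_mod_cast WithBot.bot_lt_coe (n : ℕ))]
  intro i _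
  exact lt_of_le_of_lt (Polynomial.degree_C_mul_X_pow_le _ _) (by exact_mod_cast i.isLt)

lemma ee_monic {n : ℕ} (v : Fin n → F) : (ee n v).Monic :=
  Polynomial.monic_X_pow_add (ee_deglt v)

lemma ee_natDegree {n : ℕ} (v : Fin n → F) : (ee n v).natDegree = n := by
  have h : (∑ i : Fin n, C (v i) * X ^ (i : ℕ) : Polynomial F).degree
      < (X ^ n : Polynomial F).degree := by
    rw [degree_X_pow]; exact ee_deglt v
  have h2 := Polynomial.degree_add_eq_left_of_degree_lt h
  rw [degree_X_pow] at h2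
  exact natDegree_eq_of_degree_eq_some h2

lemma ee_inj {n : ℕ} : Function.Injective (ee (F := F) n) := by
  intro v w h
  funext i
  have h2 := congrArg (fun P => Polynomial.coeff P (i : ℕ)) h
  simp only [ee_coeff _ i.isLt, Fin.eta] at h2
  exact h2

lemma Mset_eq [Fintype F] {n : ℕ} :
    Mset F n = ↑(Finset.image (ee (F := F) n) Finset.univ) := by
  ext G
  simp only [Mset, Set.mem_setOf_eq, Finset.coe_image, Finset.coe_univ, Set.image_univ,
    Set.mem_range]
  constructor
  · rintro ⟨hm, hd⟩
    refine ⟨fun i => G.coeff (i : ℕ), ?_⟩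
    rw [ee]
    conv_rhs => rw [hm.as_sum, hd]
    congr 1
    exact (Finset.sum_range fun i => C (G.coeff i) * X ^ i).symm
  · rintro ⟨v, rfl⟩
    exact ⟨ee_monic v, ee_natDegree v⟩

lemma toInf_ee {n : ℕ} (v : Fin n → F) :
    toInf (ee n v)
      = (Tinf F) ^ n + ∑ i : Fin n, HahnSeries.single (0 : ℤ) (v i) * (Tinf F) ^ (i : ℕ) := by
  rw [toInf, ee, map_add, map_pow, map_sum, Polynomial.aeval_X]
  congr 1
  refine Finset.sum_congr rfl fun i _ => ?_
  rw [map_mul, map_pow, Polynomial.aeval_X, Polynomial.aeval_C]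
  congr 1
  rw [HahnSeries.algebraMap_apply', ← PowerSeries.C_eq_algebraMap, HahnSeries.ofPowerSeries_C,
    HahnSeries.C_apply]

lemma eInf_toInf_ee {n : ℕ} (v : Fin n → F) (θ : LaurentSeries F) :
    eInf p (toInf (ee n v) * θ)
      = eInf p ((Tinf F) ^ n * θ)
        * ∏ i : Fin n, psiChar p (v i * θ.coeff (1 + (i : ℕ))) := by
  have hco : (toInf (ee n v) * θ).coeff 1
      = ((Tinf F) ^ n * θ).coeff 1 + ∑ i : Fin n, v i * θ.coeff (1 + (i : ℕ)) := by
    rw [toInf_ee, add_mul, Finset.sum_mul, HahnSeries.coeff_add]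
    congr 1
    have hs := map_sum (HahnSeries.coeff.addMonoidHom (1 : ℤ))
      (fun i : Fin n => HahnSeries.single (0 : ℤ) (v i) * (Tinf F) ^ (i : ℕ) * θ) Finset.univ
    rw [show (HahnSeries.coeff.addMonoidHom (1 : ℤ))
        (∑ i : Fin n, HahnSeries.single (0 : ℤ) (v i) * (Tinf F) ^ (i : ℕ) * θ)
        = (∑ i : Fin n, HahnSeries.single (0 : ℤ) (v i) * (Tinf F) ^ (i : ℕ) * θ).coeff 1
        from rfl] at hs
    rw [hs]
    exact Finset.sum_congr rfl fun i _ => coeff_term (v i) (i : ℕ) θ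
  rw [eInf_def, hco, psiChar_add, psiChar_sum, eInf_def]

end EE

/-- The local factor `W i`. -/
def Wsum [Fintype F] (Cc : ℕ → Set F) (θ : LaurentSeries F) (i : ℕ) : ℂ :=
  ∑ g : F, Set.indicator (Cc i) (fun _ => (1 : ℂ)) g * psiChar p (g * θ.coeff (1 + (i : ℕ)))

lemma fhat_factor [Fintype F] (Cc : ℕ → Set F) (n : ℕ) (θ : LaurentSeries F) :
    FhatGen p Cc n θ
      = eInf p ((Tinf F) ^ n * θ) * ∏ i ∈ Finset.range n, Wsum p Cc θ i := by
  classical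
  rw [FhatGen, Mset_eq, finsum_mem_coe_finset,
    Finset.sum_image (fun a _ b _ h => ee_inj h)]
  have hterm : ∀ v : Fin n → F,
      (∏ i ∈ Finset.range n, Set.indicator (Cc i) (fun _ => (1 : ℂ)) ((ee n v).coeff i))
          * eInf p (toInf (ee n v) * θ)
        = eInf p ((Tinf F) ^ n * θ)
          * ∏ i : Fin n, (Set.indicator (Cc (i : ℕ)) (fun _ => (1 : ℂ)) (v i)
              * psiChar p (v i * θ.coeff (1 + (i : ℕ)))) := by
    intro v
    have hc1 : (∏ i ∈ Finset.range n, Set.indicator (Cc i) (fun _ => (1 : ℂ)) ((ee n v).coeff i))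
        = ∏ i : Fin n, Set.indicator (Cc (i : ℕ)) (fun _ => (1 : ℂ)) (v i) := by
      rw [← Fin.prod_univ_eq_prod_range
        (fun i => Set.indicator (Cc i) (fun _ => (1 : ℂ)) ((ee n v).coeff i)) n]
      exact Finset.prod_congr rfl fun i _ => by rw [ee_coeff v i.isLt, Fin.eta]
    rw [hc1, eInf_toInf_ee, Finset.prod_mul_distrib]
    ring
  rw [Finset.sum_congr rfl fun v _ => hterm v, ← Finset.mul_sum]
  congr 1
  rw [← Fin.prod_univ_eq_prod_range (Wsum p Cc θ) n]
  unfold Wsum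
  exact (Fintype.prod_sum fun (i : Fin n) (g : F) =>
    Set.indicator (Cc (i : ℕ)) (fun _ => (1 : ℂ)) g
      * psiChar p (g * θ.coeff (1 + (i : ℕ)))).symm

lemma Wsum_shift [Fintype F] (Cc : ℕ → Set F) (θ : LaurentSeries F) (x i : ℕ) :
    Wsum p (fun j => Cc (x + j)) ((Tinf F) ^ x * θ) i = Wsum p Cc θ (x + i) := by
  unfold Wsum
  refine Finset.sum_congr rfl fun g _ => ?_
  rw [coeff_Tpow_mul]
  rw [show (1 + (i : ℤ)) + (x : ℤ) = 1 + ((x + i : ℕ) : ℤ) by push_cast; ring]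

end FWBaux

/-- Lemma: for `1 ≤ l ≤ n`, `0 ≤ x ≤ n − l`, `θ ∈ U`, with `K = {x,…,x+l−1}`,
`|F̂_{q,n}(θ)| ≤ α_{∉K}(#N_{∉K}(θ))·q^{#Z_{∉K}(θ)}·|F̂_{q,l}(T^x θ)|`, where `F̂_{q,l}` is the
Fourier transform of the degree-`l` constrained family with constraint sets
`C_x, …, C_{x+l−1}`. -/
theorem fhat_window_bound (F : Type) [Field F] [Fintype F]
    (p : ℕ) [Fact p.Prime] [CharP F p] [Algebra (ZMod p) F]
    (q : ℕ) (hq : q = Fintype.card F)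
    (n : ℕ) (hn : 2 ≤ n) (I J : Finset ℕ)
    (hdisj : Disjoint I J) (hunion : I ∪ J = Finset.range n)
    (a : ℕ → F) (S : ℕ → Finset F)
    (l x : ℕ) (hl1 : 1 ≤ l) (hln : l ≤ n) (hx : x ≤ n - l)
    (θ : LaurentSeries F) (hθ : θ ∈ UnitInt F) :
    ‖FhatGen p (Ccon I a S) n θ‖ ≤
      (alphaJ (J \ Finset.Ico x (x + l)) S
          (((J \ Finset.Ico x (x + l)).filter
            (fun i : ℕ => coeffT θ (-(i : ℤ) - 1) ≠ 0)).card : ℕ) : ℝ) *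
        (q : ℝ) ^ (((J \ Finset.Ico x (x + l)).filter
            (fun i : ℕ => coeffT θ (-(i : ℤ) - 1) = 0)).card) *
        ‖FhatGen p (fun i => Ccon I a S (x + i)) l ((Tinf F) ^ x * θ)‖ := by
  classical
  have hxl : x + l ≤ n := by omega
  have hcoeffT : ∀ i : ℕ, coeffT θ (-(i : ℤ) - 1) = θ.coeff (1 + (i : ℕ)) := by
    intro i
    rw [coeffT]
    congr 1
    ring
  simp only [hcoeffT]
  have habs1 : ‖FhatGen p (Ccon I a S) n θ‖
      = ∏ i ∈ Finset.range n, ‖FWBaux.Wsum p (Ccon I a S) θ i‖ := by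
    rw [FWBaux.fhat_factor, norm_mul, FWBaux.abs_eInf, one_mul, norm_prod]
  have habs2 : ‖FhatGen p (fun i => Ccon I a S (x + i)) l ((Tinf F) ^ x * θ)‖
      = ∏ i ∈ Finset.Ico x (x + l), ‖FWBaux.Wsum p (Ccon I a S) θ i‖ := by
    rw [FWBaux.fhat_factor, norm_mul, FWBaux.abs_eInf, one_mul, norm_prod]
    have h1 : ∀ i ∈ Finset.range l,
        ‖FWBaux.Wsum p (fun j => Ccon I a S (x + j)) ((Tinf F) ^ x * θ) i‖
          = ‖FWBaux.Wsum p (Ccon I a S) θ (x + i)‖ := fun i _ => by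
      rw [FWBaux.Wsum_shift]
    rw [Finset.prod_congr rfl h1, Finset.prod_Ico_eq_prod_range,
      show x + l - x = l from by omega]
  have hIco : Finset.Ico x (x + l) ⊆ Finset.range n := by
    intro i hi
    simp only [Finset.mem_Ico] at hi
    simp only [Finset.mem_range]
    omega
  have hW_I : ∀ i ∈ I, ‖FWBaux.Wsum p (Ccon I a S) θ i‖ = 1 := by
    intro i hi
    unfold FWBaux.Wsum
    simp only [Ccon, if_pos hi]
    have h1 : ∀ g : F, Set.indicator ({a i} : Set F) (fun _ => (1 : ℂ)) g
        * psiChar p (g * θ.coeff (1 + (i : ℕ)))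
        = if g = a i then psiChar p (g * θ.coeff (1 + (i : ℕ))) else 0 := by
      intro g
      by_cases h : g = a i <;> simp [Set.indicator_apply, h]
    rw [Finset.sum_congr rfl fun g _ => h1 g,
      Finset.sum_ite_eq' Finset.univ (a i), if_pos (Finset.mem_univ _)]
    exact FWBaux.abs_psiChar p _
  have hW_J : ∀ i ∈ J, FWBaux.Wsum p (Ccon I a S) θ i
      = ∑ g ∈ Finset.univ \ S i, psiChar p (g * θ.coeff (1 + (i : ℕ))) := by
    intro i hi
    have hiI : i ∉ I := Finset.disjoint_right.mp hdisj hi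
    unfold FWBaux.Wsum
    simp only [Ccon, if_neg hiI]
    have h1 : ∀ g : F, Set.indicator ({b : F | b ∉ S i}) (fun _ => (1 : ℂ)) g
        * psiChar p (g * θ.coeff (1 + (i : ℕ)))
        = if g ∉ S i then psiChar p (g * θ.coeff (1 + (i : ℕ))) else 0 := by
      intro g
      by_cases h : g ∈ S i <;> simp [Set.indicator_apply, h]
    rw [Finset.sum_congr rfl fun g _ => h1 g, ← Finset.sum_filter]
    congr 1
    ext g
    simp
  have hW_J0 : ∀ i ∈ J, θ.coeff (1 + (i : ℕ)) = 0 →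
      ‖FWBaux.Wsum p (Ccon I a S) θ i‖ ≤ (q : ℝ) := by
    intro i hi h0
    rw [hW_J i hi, h0]
    simp only [mul_zero, FWBaux.psiChar_zero, Finset.sum_const, nsmul_eq_mul, mul_one]
    rw [Complex.norm_natCast]
    have hc : (Finset.univ \ S i).card ≤ q := by
      rw [hq]
      exact le_trans (Finset.card_le_card Finset.sdiff_subset) (le_of_eq Finset.card_univ)
    exact_mod_cast hc
  have hW_J1 : ∀ i ∈ J, θ.coeff (1 + (i : ℕ)) ≠ 0 →
      ‖FWBaux.Wsum p (Ccon I a S) θ i‖ ≤ (((S i).card : ℝ) + 1) := by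
    intro i hi h0
    rw [hW_J i hi, Finset.sum_sdiff_eq_sub (Finset.subset_univ _),
      FWBaux.sum_psiChar p h0, zero_sub, norm_neg]
    refine le_trans (norm_sum_le _ _) ?_
    rw [Finset.sum_congr rfl fun g _ => FWBaux.abs_psiChar p _, Finset.sum_const,
      nsmul_eq_mul, mul_one]
    linarith
  have hsplit : Finset.range n \ Finset.Ico x (x + l)
      = (I \ Finset.Ico x (x + l)) ∪ (J \ Finset.Ico x (x + l)) := by
    rw [← hunion, Finset.union_sdiff_distrib]
  have hdisj2 : Disjoint (I \ Finset.Ico x (x + l)) (J \ Finset.Ico x (x + l)) :=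
    hdisj.mono Finset.sdiff_subset Finset.sdiff_subset
  have hprodI : ∏ i ∈ I \ Finset.Ico x (x + l),
      ‖FWBaux.Wsum p (Ccon I a S) θ i‖ = 1 :=
    Finset.prod_eq_one fun i hi => hW_I i (Finset.mem_sdiff.mp hi).1
  have hZs : ∏ i ∈ (J \ Finset.Ico x (x + l)).filter (fun i => θ.coeff (1 + (i : ℕ)) = 0),
      ‖FWBaux.Wsum p (Ccon I a S) θ i‖
      ≤ (q : ℝ) ^ (((J \ Finset.Ico x (x + l)).filter
          (fun i => θ.coeff (1 + (i : ℕ)) = 0)).card) := by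
    refine le_trans (Finset.prod_le_prod (g := fun _ => (q : ℝ))
      (fun i _ => norm_nonneg _) (fun i hi => ?_)) ?_
    · have hmem := Finset.mem_filter.mp hi
      exact hW_J0 i (Finset.mem_sdiff.mp hmem.1).1 hmem.2
    · rw [Finset.prod_const]
  have hNs : ∏ i ∈ (J \ Finset.Ico x (x + l)).filter (fun i => ¬ θ.coeff (1 + (i : ℕ)) = 0),
      ‖FWBaux.Wsum p (Ccon I a S) θ i‖
      ≤ ((alphaJ (J \ Finset.Ico x (x + l)) S
          (((J \ Finset.Ico x (x + l)).filter
            (fun i => ¬ θ.coeff (1 + (i : ℕ)) = 0)).card)) : ℝ) := by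
    refine le_trans (Finset.prod_le_prod (g := fun i => (((S i).card : ℝ) + 1))
      (fun i _ => norm_nonneg _) (fun i hi => ?_)) ?_
    · have hmem := Finset.mem_filter.mp hi
      exact hW_J1 i (Finset.mem_sdiff.mp hmem.1).1 hmem.2
    · rw [show (∏ i ∈ (J \ Finset.Ico x (x + l)).filter
            (fun i => ¬ θ.coeff (1 + (i : ℕ)) = 0), (((S i).card : ℝ) + 1))
          = (((∏ i ∈ (J \ Finset.Ico x (x + l)).filter
            (fun i => ¬ θ.coeff (1 + (i : ℕ)) = 0), ((S i).card + 1) : ℕ)) : ℝ) from by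
        push_cast; rfl]
      have hle : (∏ i ∈ (J \ Finset.Ico x (x + l)).filter
            (fun i => ¬ θ.coeff (1 + (i : ℕ)) = 0), ((S i).card + 1))
          ≤ alphaJ (J \ Finset.Ico x (x + l)) S
            (((J \ Finset.Ico x (x + l)).filter
              (fun i => ¬ θ.coeff (1 + (i : ℕ)) = 0)).card) := by
        unfold alphaJ
        exact Finset.le_sup (f := fun s => ∏ i ∈ s, ((S i).card + 1))
          (Finset.mem_powersetCard.mpr ⟨Finset.filter_subset _ _, rfl⟩)
      exact_mod_cast hle
  have hD : ∏ i ∈ Finset.range n \ Finset.Ico x (x + l),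
      ‖FWBaux.Wsum p (Ccon I a S) θ i‖
      ≤ ((alphaJ (J \ Finset.Ico x (x + l)) S
          (((J \ Finset.Ico x (x + l)).filter
            (fun i => θ.coeff (1 + (i : ℕ)) ≠ 0)).card)) : ℝ) *
        (q : ℝ) ^ (((J \ Finset.Ico x (x + l)).filter
            (fun i => θ.coeff (1 + (i : ℕ)) = 0)).card) := by
    rw [hsplit, Finset.prod_union hdisj2, hprodI, one_mul]
    rw [← Finset.prod_filter_mul_prod_filter_not (J \ Finset.Ico x (x + l))
      (fun i => θ.coeff (1 + (i : ℕ)) = 0)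
      (fun i => ‖FWBaux.Wsum p (Ccon I a S) θ i‖)]
    refine le_trans (mul_le_mul hZs hNs
      (Finset.prod_nonneg fun i _ => norm_nonneg _) (by positivity)) ?_
    exact le_of_eq (mul_comm _ _)
  rw [habs1, ← Finset.prod_sdiff hIco, habs2]
  exact mul_le_mul_of_nonneg_right hD
    (Finset.prod_nonneg fun i _ => norm_nonneg _)

end
end
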